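/- arXiv:2207.10252 — 8 statements merged into one kernel-verified Lean document; each statement's English description precedes it below -/
import Mathlib

section
/- Define a(n,k) for n,k ≥ 0 by a(0,0)=1, a(0,k)=0 for k>0, a(n,-1)=0, and a(n,k) = a(n-1,k-1) + (2k+1)·a(n-1,k) + (k+1)^2·a(n-1,k+1) for n ≥ 1. Then a(n,k) = C(n,k)^2 · (n-k)! for all n,k ≥ 0. In particular a(n,0) = n!. -/
namespace PP

def isPP {n : ℕ} (M : Fin n → Fin n → Bool) : Prop :=
  (∀ i j j', M i j = true → M i j' = true → j = j') ∧
  (∀ i i' j, M i j = true → M i' j = true → i = i')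

def zeroRows {n : ℕ} (M : Fin n → Fin n → Bool) : ℕ :=
  (Finset.univ.filter (fun i : Fin n => ∀ j, M i j = false)).card

def invStat {n : ℕ} (M : Fin n → Fin n → Bool) : ℕ :=
  (Finset.univ.filter (fun p : Fin n × Fin n =>
    M p.1 p.2 = false ∧ (∀ j' < p.2, M p.1 j' = false) ∧ (∀ i' < p.1, M i' p.2 = false) ∧
    ((∃ j', M p.1 j' = true) ∨ (∃ i', M i' p.2 = true)))).card

def rlminStat {n : ℕ} (M : Fin n → Fin n → Bool) : ℕ :=
  (Finset.univ.filter (fun p : Fin n × Fin n =>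
    M p.1 p.2 = true ∧ ∀ l < p.2, ∃ i' < p.1, M i' l = true)).card

def excStat {n : ℕ} (M : Fin n → Fin n → Bool) : ℕ :=
  (Finset.univ.filter (fun p : Fin n × Fin n => M p.1 p.2 = true ∧ p.1 < p.2)).card

def wexStat {n : ℕ} (M : Fin n → Fin n → Bool) : ℕ :=
  (Finset.univ.filter (fun p : Fin n × Fin n => M p.1 p.2 = true ∧ p.1 ≤ p.2)).card

def reachN {n : ℕ} (M : Fin n → Fin n → Bool) : ℕ → Fin n → Fin n → Prop
  | 0, i, j => i = j
  | m+1, i, j => ∃ l, M i l = true ∧ reachN M m l j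

noncomputable def cycStat {n : ℕ} (M : Fin n → Fin n → Bool) : ℕ :=
  Nat.card {i : Fin n // (∃ m, 0 < m ∧ reachN M m i i) ∧ ∀ j, (∃ m, reachN M m i j) → j ≤ i}

def fixStat {n : ℕ} (M : Fin n → Fin n → Bool) : ℕ :=
  (Finset.univ.filter (fun i : Fin n => M i i = true)).card

noncomputable def cycGe2Stat {n : ℕ} (M : Fin n → Fin n → Bool) : ℕ :=
  Nat.card {i : Fin n // (∃ m, 0 < m ∧ reachN M m i i) ∧ (∀ j, (∃ m, reachN M m i j) → j ≤ i) ∧ M i i = false}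

def Conn {n : ℕ} (M : Fin n → Fin n → Bool) : Prop :=
  ∀ i : ℕ, 0 < i → i < n → ∃ r : Fin n, r.1 < i ∧ ∀ c : Fin n, c.1 < i → M r c = false

def UpDownFrom {n : ℕ} (M : Fin n → Fin n → Bool) (i : Fin n) : Prop :=
  ∀ (m : ℕ) (a b : Fin n),
    (∀ m', 1 ≤ m' → m' ≤ m + 1 → ¬ reachN M m' i i) →
    reachN M m i a → M a b = true →
    ((Even m → a < b) ∧ (¬ Even m → b < a))

def CUD {n : ℕ} (M : Fin n → Fin n → Bool) : Prop :=
  (∀ i : Fin n,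
      ((∃ m, 0 < m ∧ reachN M m i i) ∧ ∀ j, (∃ m, reachN M m i j) → i ≤ j) →
      UpDownFrom M i) ∧
  (∀ i : Fin n, (∀ i', M i' i = false) → UpDownFrom M i)

def desStat {n : ℕ} (M : Fin n → Fin n → Bool) : ℕ :=
  (Finset.univ.filter (fun p : Fin n × Fin n =>
      M p.1 p.2 = true ∧ ∃ h : p.1.1 + 1 < n, ∃ b : Fin n, M ⟨p.1.1 + 1, h⟩ b = true ∧ b < p.2)).card
  + (Finset.univ.filter (fun p : Fin n =>
      (∀ j, M p j = false) ∧ ∃ _h : 0 < p.1, ∃ a j : Fin n,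
        M ⟨p.1 - 1, Nat.lt_of_le_of_lt (Nat.sub_le _ _) p.isLt⟩ a = true ∧
        (∀ i, M i j = false) ∧
        (Finset.univ.filter (fun m : Fin n => (∀ i, M i m = false) ∧ m < j)).card
          = (Finset.univ.filter (fun r : Fin n => (∀ c, M r c = false) ∧ r < p)).card ∧
        j < a)).card

def gbinom {R : Type*} [CommRing R] (q : R) : ℕ → ℕ → R
  | _, 0 => 1
  | 0, _+1 => 0
  | n+1, k+1 => gbinom q n k + q ^ (k+1) * gbinom q n (k+1)

end PP


lemma keyid (n k : ℕ) :
    (if k = 0 then 0 else n.choose (k-1)^2 * (n-(k-1)).factorial)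
      + (2*k+1) * (n.choose k^2 * (n-k).factorial)
      + (k+1)^2 * (n.choose (k+1)^2 * (n-(k+1)).factorial)
    = (n+1).choose k ^ 2 * (n+1-k).factorial := by
  match k with
  | 0 =>
    simp only [if_pos rfl, Nat.choose_zero_right, Nat.choose_one_right]
    match n with
    | 0 => simp
    | l+1 =>
      simp [Nat.factorial_succ]
      ring
  | j+1 =>
    simp only [if_neg (Nat.succ_ne_zero j), Nat.add_sub_cancel]
    rcases lt_trichotomy n j with h | h | h
    · rw [Nat.choose_eq_zero_of_lt h, Nat.choose_eq_zero_of_lt (by omega),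
        Nat.choose_eq_zero_of_lt (by omega), Nat.choose_eq_zero_of_lt (by omega)]
      ring
    · subst h
      rw [Nat.choose_self, Nat.choose_eq_zero_of_lt (by omega),
        Nat.choose_eq_zero_of_lt (by omega), Nat.choose_self]
      simp
    · obtain ⟨m, rfl⟩ : ∃ m, n = j + 1 + m := ⟨n - (j+1), by omega⟩
      match m with
      | 0 =>
        simp only [Nat.add_zero]
        rw [show j + 1 - j = 1 from by omega, show j+1-(j+1) = 0 from by omega,
          show j+1+1-(j+1) = 1 from by omega,
          Nat.choose_succ_self_right, Nat.choose_self,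
          Nat.choose_eq_zero_of_lt (by omega : j+1 < j+1+1),
          Nat.choose_succ_self_right]
        simp [Nat.factorial]
        ring
      | l+1 =>
        have h1 := Nat.choose_succ_right_eq (j+1+(l+1)) j
        have h2 := Nat.choose_succ_right_eq (j+1+(l+1)) (j+1)
        rw [show j+1+(l+1) - j = l+2 from by omega] at h1
        rw [show j+1+(l+1) - (j+1) = l+1 from by omega] at h2
        rw [show j+1+(l+1) - j = l+2 from by omega, show j+1+(l+1)-(j+1) = l+1 from by omega,
          show j+1+(l+1)-(j+1+1) = l from by omega, show j+1+(l+1)+1-(j+1) = l+2 from by omega,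
          Nat.choose_succ_succ]
        set c := (j+1+(l+1)).choose j
        set d := (j+1+(l+1)).choose (j+1)
        set e := (j+1+(l+1)).choose (j+2)
        rw [show (l+2).factorial = (l+2)*((l+1)*l.factorial) from by
            rw [Nat.factorial_succ, Nat.factorial_succ],
          show (l+1).factorial = (l+1)*l.factorial from Nat.factorial_succ l]
        zify at h1 h2 ⊢
        linear_combination (2*(l+1)*(l.factorial:ℤ)*d)*h1
          + ((l.factorial:ℤ)*(e*(j+2)+d*(l+1)))*h2

theorem stmt1 (a : ℕ → ℕ → ℕ) (h00 : a 0 0 = 1) (h0k : ∀ k, 0 < k → a 0 k = 0)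
    (hrec : ∀ n k, a (n+1) k =
      (if k = 0 then 0 else a n (k-1)) + (2*k+1) * a n k + (k+1)^2 * a n (k+1)) :
    (∀ n k, a n k = n.choose k ^ 2 * (n - k).factorial) ∧ (∀ n, a n 0 = n.factorial) := by
  have key : ∀ n k, a n k = n.choose k ^ 2 * (n - k).factorial := by
    intro n
    induction n with
    | zero =>
      intro k
      match k with
      | 0 => simpa using h00
      | j+1 => rw [h0k _ (Nat.succ_pos j), Nat.choose_eq_zero_of_lt (Nat.succ_pos j)]; ring
    | succ n ih =>
      intro k
      rw [hrec, ih, ih, ih]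
      have := keyid n k
      split at this <;> split <;> simp_all
  refine ⟨key, fun n => by simpa using key n 0⟩
end

section
/- The generating function of partial permutations in P(n,k) by the inversion statistic is the q-analog formula: ∑_{π ∈ P(n,k)} q^{inv(π)} = [n choose k]_q^2 · [n-k]_q!, where [n choose k]_q is the Gaussian binomial coefficient and [m]_q! = [1]_q[2]_q⋯[m]_q. -/
/-!
A partial permutation `M` with `k` zero rows is determined by its sets `A` and `B` of nonzero rows
and columns, both of size `m = n - k`, and by the permutation `σ` of `Fin m` matching the `s`-th
row of `A` with the `σ s`-th column of `B`. An inversion cell of `M` in a nonzero row and a zero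
column lies left of the `1` of its row, so these cells are counted by the inversions of the
0/1-word of `B`; by transposition, those in a zero row and a nonzero column are counted by the
0/1-word of `A`; and those in a nonzero row and column sit between two `1`s forming an inversion of
`σ`. Hence `inv M = inv B + inv σ + inv A` and the sum factors. Over `m`-subsets the 0/1-word
inversions give the Gaussian binomial (split off the largest element), and over `σ` the inversions
give `[m]_q!` (record `σ (last)` and standardize the rest).
-/

open Finset Equiv

theorem Finset.sum_powersetCard_succ_insert {α M : Type*} [DecidableEq α]
    [AddCommMonoid M] {a : α} {s : Finset α} (ha : a ∉ s) (m : ℕ) (f : Finset α → M) :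
    ∑ t ∈ (insert a s).powersetCard (m + 1), f t =
      ∑ t ∈ s.powersetCard (m + 1), f t + ∑ t ∈ s.powersetCard m, f (insert a t) := by
  have notMem {t : Finset α} (ht : t ∈ s.powersetCard m) : a ∉ t :=
    fun h => ha ((mem_powersetCard.mp ht).1 h)
  rw [powersetCard_succ_insert ha, sum_union, sum_image]
  · intro t ht t' ht' h
    rw [← erase_insert (notMem ht), ← erase_insert (notMem ht'), h]
  · refine disjoint_left.mpr fun t ht ht' => ?_
    obtain ⟨t', -, rfl⟩ := mem_image.mp ht'
    exact ha ((mem_powersetCard.mp ht).1 (mem_insert_self a t'))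

theorem Finset.exists_orderEmbOfFin_eq {α : Type*} [LinearOrder α] {s : Finset α} {k : ℕ}
    (h : #s = k) {a : α} (ha : a ∈ s) : ∃ i, s.orderEmbOfFin h i = a := by
  rwa [← mem_coe, ← range_orderEmbOfFin s h] at ha

theorem Finset.sum_orderEmbOfFin {α M : Type*} [LinearOrder α] [AddCommMonoid M]
    (s : Finset α) {k : ℕ} (h : #s = k) (f : α → M) :
    ∑ i, f (s.orderEmbOfFin h i) = ∑ a ∈ s, f a := by
  conv_rhs => rw [← map_orderEmbOfFin_univ s h, sum_map]
  rfl

theorem Finset.card_filter_prod_eq_sum {α β : Type*} [Fintype α] [Fintype β]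
    (P : α × β → Prop) [DecidablePred P] : #{p | P p} = ∑ a, #{b | P (a, b)} := by
  simp only [card_filter, Fintype.sum_prod_type]

namespace PP

section QBinomial

variable {R : Type*} [CommRing R] (q : R)

theorem gbinom_eq_zero_of_lt : ∀ {n k : ℕ}, n < k → gbinom q n k = 0
  | 0, _ + 1, _ => rfl
  | n + 1, k + 1, h => by
    rw [gbinom, gbinom_eq_zero_of_lt (by omega), gbinom_eq_zero_of_lt (by omega), mul_zero,
      add_zero]

theorem gbinom_zero_right (n : ℕ) : gbinom q n 0 = 1 := by cases n <;> rfl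

theorem gbinom_self : ∀ n : ℕ, gbinom q n n = 1
  | 0 => rfl
  | n + 1 => by
    rw [gbinom, gbinom_self n, gbinom_eq_zero_of_lt q n.lt_succ_self, mul_zero, add_zero]

/-- The inversion number of the 0/1-word with support `C`. -/
def subsetInv {α : Type*} [LinearOrder α] [LocallyFiniteOrderBot α] (C : Finset α) : ℕ :=
  ∑ a ∈ C, #(Iio a \ C)

theorem subsetInv_insert {n : ℕ} {A : Finset ℕ} (hA : A ⊆ range n) :
    subsetInv (insert n A) = subsetInv A + (n - #A) := by
  have hn : n ∉ A := fun h => by simpa using hA h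
  rw [subsetInv, sum_insert hn, add_comm, subsetInv,
    sdiff_insert_of_notMem (by simp), card_sdiff_of_subset (by rwa [Nat.Iio_eq_range]),
    Nat.card_Iio]
  congr 1
  refine sum_congr rfl fun a ha => ?_
  rw [sdiff_insert_of_notMem]
  simpa using (mem_range.mp (hA ha)).le

theorem sum_pow_subsetInv_range : ∀ n m : ℕ, m ≤ n →
    ∑ A ∈ (range n).powersetCard m, q ^ subsetInv A = gbinom q n (n - m)
  | n, 0, _ => by simp [subsetInv, gbinom_self]
  | n + 1, m + 1, hm => by
    rw [range_add_one, sum_powersetCard_succ_insert (by simp)]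
    have hins : ∀ A ∈ (range n).powersetCard m,
        q ^ subsetInv (insert n A) = q ^ (n - m) * q ^ subsetInv A := fun A hA => by
      obtain ⟨hsub, hcard⟩ := mem_powersetCard.mp hA
      rw [subsetInv_insert hsub, hcard, pow_add, mul_comm]
    rw [sum_congr rfl hins, ← mul_sum, sum_pow_subsetInv_range n m (by omega)]
    rcases (Nat.lt_or_eq_of_le (Nat.le_of_succ_le_succ hm)) with hlt | rfl
    · rw [sum_pow_subsetInv_range n (m + 1) hlt, show n + 1 - (m + 1) = n - (m + 1) + 1 by omega,
        gbinom, show n - (m + 1) + 1 = n - m by omega]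
    · rw [powersetCard_eq_empty.mpr (by simp), sum_empty]
      simp [gbinom_zero_right]

theorem subsetInv_map_valEmbedding {n : ℕ} (C : Finset (Fin n)) :
    subsetInv (C.map Fin.valEmbedding) = subsetInv C := by
  rw [subsetInv, sum_map, subsetInv]
  refine sum_congr rfl fun a _ => ?_
  rw [Fin.valEmbedding_apply, ← Fin.map_valEmbedding_Iio, ← Finset.map_sdiff, card_map]

theorem sum_pow_subsetInv {n m : ℕ} (hm : m ≤ n) :
    ∑ C ∈ (univ : Finset (Fin n)).powersetCard m, q ^ subsetInv C = gbinom q n (n - m) := by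
  rw [← sum_pow_subsetInv_range q n m hm, ← Nat.Iio_eq_range, ← Fin.map_valEmbedding_univ,
    powersetCard_map, sum_map]
  exact sum_congr rfl fun C _ => by
    rw [RelEmbedding.coe_toEmbedding, mapEmbedding_apply, subsetInv_map_valEmbedding]

end QBinomial

section QFactorial

variable {m : ℕ}

def insertLast (t : Fin (m + 1)) (τ : Perm (Fin m)) : Perm (Fin (m + 1)) :=
  finSuccEquivLast.trans ((Equiv.optionCongr τ).trans (finSuccEquiv' t).symm)

@[simp] theorem insertLast_last (t : Fin (m + 1)) (τ : Perm (Fin m)) :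
    insertLast t τ (Fin.last m) = t := by simp [insertLast]

@[simp] theorem insertLast_castSucc (t : Fin (m + 1)) (τ : Perm (Fin m)) (i : Fin m) :
    insertLast t τ i.castSucc = t.succAbove (τ i) := by simp [insertLast]

theorem insertLast_bijective : Function.Bijective (Function.uncurry (insertLast (m := m))) := by
  refine (Fintype.bijective_iff_injective_and_card _).mpr
    ⟨fun ⟨t, τ⟩ ⟨t', τ'⟩ h => ?_, ?_⟩
  · have ht : t = t' := by simpa using congr($h (Fin.last m))
    subst ht
    refine Prod.ext rfl (Equiv.ext fun i => t.succAbove_right_injective ?_)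
    simpa using congr($h i.castSucc)
  · simp [Fintype.card_perm, Nat.factorial_succ]

def permInv (σ : Perm (Fin m)) : ℕ := #{p : Fin m × Fin m | p.1 < p.2 ∧ σ p.2 < σ p.1}

theorem permInv_eq_sum (σ : Perm (Fin m)) :
    permInv σ = ∑ i, ∑ j, if i < j ∧ σ j < σ i then 1 else 0 := by
  rw [permInv, card_filter, Fintype.sum_prod_type]

theorem card_filter_lt_succAbove (t : Fin (m + 1)) : #{v : Fin m | t < t.succAbove v} = m - t := by
  have := Fin.sum_univ_succAbove (fun w => if t < w then 1 else 0) t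
  simp only [lt_self_iff_false, if_false, zero_add, ← card_filter] at this
  rw [← this, filter_lt_eq_Ioi, Fin.card_Ioi]
  omega

theorem permInv_insertLast (t : Fin (m + 1)) (τ : Perm (Fin m)) :
    permInv (insertLast t τ) = (m - t) + permInv τ := by
  have hlast : ∑ i, (if t < t.succAbove (τ i) then 1 else 0) = m - t := by
    rw [Equiv.sum_comp τ (fun v => if t < t.succAbove v then 1 else 0), ← card_filter,
      card_filter_lt_succAbove]
  have hnot (x : Fin m) : ¬ Fin.last m < x.castSucc := (Fin.le_last _).not_gt
  simp only [permInv_eq_sum, Fin.sum_univ_castSucc, insertLast_last, insertLast_castSucc,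
    Fin.castSucc_lt_castSucc_iff, Fin.succAbove_lt_succAbove_iff, Fin.castSucc_lt_last,
    true_and, lt_self_iff_false, false_and, if_false, add_zero, sum_add_distrib, hlast, hnot,
    sum_const_zero]
  exact add_comm _ _

variable {R : Type*} [CommRing R] (q : R)

theorem sum_pow_permInv : ∀ m : ℕ,
    ∑ σ : Perm (Fin m), q ^ permInv σ = ∏ i ∈ Icc 1 m, ∑ j ∈ range i, q ^ j
  | 0 => by simp [permInv]
  | m + 1 => by
    rw [← insertLast_bijective.sum_comp, Fintype.sum_prod_type]
    simp only [Function.uncurry_apply_pair, permInv_insertLast, pow_add, ← sum_mul, ← mul_sum,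
      sum_pow_permInv m]
    rw [prod_Icc_succ_top (Nat.le_add_left 1 m), mul_comm]
    congr 1
    rw [Fin.sum_univ_eq_sum_range (fun i => q ^ (m - i)), ← sum_range_reflect]
    exact sum_congr rfl fun j hj => by
      rw [mem_range] at hj
      rw [show m - (m + 1 - 1 - j) = j by omega]

end QFactorial

variable {n : ℕ}

def rowsOf (M : Fin n → Fin n → Bool) : Finset (Fin n) := {i | ∃ j, M i j = true}

def colsOf (M : Fin n → Fin n → Bool) : Finset (Fin n) := rowsOf (Function.swap M)

theorem isPP_swap {M : Fin n → Fin n → Bool} (hM : isPP M) : isPP (Function.swap M) :=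
  ⟨fun j i i' => hM.2 i i' j, fun j j' i => hM.1 i j j'⟩

theorem zeroRows_eq (M : Fin n → Fin n → Bool) : zeroRows M = n - #(rowsOf M) := by
  have hcompl := card_compl (rowsOf M)
  rw [Fintype.card_fin] at hcompl
  rw [← hcompl, zeroRows]
  congr 1
  ext i
  simp [rowsOf]

theorem card_rowsOf {M : Fin n → Fin n → Bool}
    (hM : ∀ i j j', M i j = true → M i j' = true → j = j') :
    #(rowsOf M) = #{p : Fin n × Fin n | M p.1 p.2 = true} := by
  have himage : rowsOf M = image Prod.fst {p : Fin n × Fin n | M p.1 p.2 = true} := by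
    ext i; simp [rowsOf]
  rw [himage, card_image_of_injOn]
  rintro ⟨i, j⟩ hp ⟨i', j'⟩ hp' (rfl : i = i')
  simp only [coe_filter, mem_univ, true_and, Set.mem_ofPred_eq] at hp hp'
  rw [hM i j j' hp hp']

theorem card_colsOf {M : Fin n → Fin n → Bool} (hM : isPP M) : #(colsOf M) = #(rowsOf M) := by
  rw [colsOf, card_rowsOf (isPP_swap hM).1, card_rowsOf hM.1]
  exact card_equiv (Equiv.prodComm _ _) (by simp)

def IsInvCell (M : Fin n → Fin n → Bool) (p : Fin n × Fin n) : Prop :=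
  M p.1 p.2 = false ∧ (∀ j' < p.2, M p.1 j' = false) ∧ (∀ i' < p.1, M i' p.2 = false) ∧
    ((∃ j', M p.1 j' = true) ∨ (∃ i', M i' p.2 = true))

instance (M : Fin n → Fin n → Bool) : DecidablePred (IsInvCell M) :=
  fun _ => by unfold IsInvCell; infer_instance

theorem invStat_eq_card (M : Fin n → Fin n → Bool) : invStat M = #{p | IsInvCell M p} := rfl

theorem isInvCell_swap (M : Fin n → Fin n → Bool) (p : Fin n × Fin n) :
    IsInvCell (Function.swap M) p.swap ↔ IsInvCell M p := by
  unfold IsInvCell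
  simp only [Prod.fst_swap, Prod.snd_swap, Function.swap]
  tauto

def rowInv (M : Fin n → Fin n → Bool) : ℕ :=
  #{p | IsInvCell M p ∧ p.1 ∈ rowsOf M ∧ p.2 ∉ colsOf M}

def crossInv (M : Fin n → Fin n → Bool) : ℕ :=
  #{p | IsInvCell M p ∧ p.1 ∈ rowsOf M ∧ p.2 ∈ colsOf M}

theorem rowInv_swap (M : Fin n → Fin n → Bool) :
    rowInv (Function.swap M) = #{p | IsInvCell M p ∧ p.2 ∈ colsOf M ∧ p.1 ∉ rowsOf M} := by
  refine card_equiv (Equiv.prodComm _ _) fun p => ?_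
  simp only [mem_filter, mem_univ, true_and, Equiv.prodComm_apply, ← isInvCell_swap M p.swap,
    Prod.swap_swap]
  exact Iff.rfl

theorem invStat_eq_rowInv_add (M : Fin n → Fin n → Bool) :
    invStat M = rowInv M + crossInv M + rowInv (Function.swap M) := by
  have hcover (p : Fin n × Fin n) (hp : IsInvCell M p) :
      p.1 ∈ rowsOf M ∨ p.2 ∈ colsOf M := by
    simpa [rowsOf, colsOf] using hp.2.2.2
  rw [invStat_eq_card, rowInv, crossInv, rowInv_swap, card_filter, card_filter, card_filter,
    card_filter, ← sum_add_distrib, ← sum_add_distrib]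
  refine sum_congr rfl fun p _ => ?_
  by_cases hp : IsInvCell M p
  · have := hcover p hp
    by_cases hr : p.1 ∈ rowsOf M <;> by_cases hc : p.2 ∈ colsOf M <;> simp_all
  · simp [hp]

section OfPerm

variable {m : ℕ} {A B : Finset (Fin n)} (hA : #A = m) (hB : #B = m) (σ : Perm (Fin m))

def ofPerm : Fin n → Fin n → Bool := fun i j =>
  decide (∃ s, A.orderEmbOfFin hA s = i ∧ B.orderEmbOfFin hB (σ s) = j)

theorem ofPerm_eq_true_iff {i j : Fin n} : ofPerm hA hB σ i j = true ↔
    ∃ s, A.orderEmbOfFin hA s = i ∧ B.orderEmbOfFin hB (σ s) = j := by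
  simp [ofPerm]

theorem swap_ofPerm : Function.swap (ofPerm hA hB σ) = ofPerm hB hA σ.symm := by
  funext j i
  rw [Function.swap, Bool.eq_iff_iff, ofPerm_eq_true_iff, ofPerm_eq_true_iff]
  constructor
  · rintro ⟨s, rfl, rfl⟩
    exact ⟨σ s, rfl, by simp⟩
  · rintro ⟨t, rfl, rfl⟩
    exact ⟨σ.symm t, rfl, by simp⟩

theorem ofPerm_orderEmbOfFin_left (s : Fin m) (j : Fin n) :
    ofPerm hA hB σ (A.orderEmbOfFin hA s) j = true ↔ B.orderEmbOfFin hB (σ s) = j := by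
  simp [ofPerm_eq_true_iff]

theorem ofPerm_orderEmbOfFin_right (t : Fin m) (i : Fin n) :
    ofPerm hA hB σ i (B.orderEmbOfFin hB t) = true ↔ A.orderEmbOfFin hA (σ.symm t) = i := by
  change Function.swap (ofPerm hA hB σ) _ _ = true ↔ _
  rw [swap_ofPerm, ofPerm_orderEmbOfFin_left]

theorem ofPerm_eq_false_of_notMem_left {i : Fin n} (hi : i ∉ A) (j : Fin n) :
    ofPerm hA hB σ i j = false := by
  rw [← Bool.not_eq_true, ofPerm_eq_true_iff]
  rintro ⟨s, rfl, -⟩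
  exact hi (orderEmbOfFin_mem A hA s)

theorem ofPerm_eq_false_of_notMem_right {j : Fin n} (hj : j ∉ B) (i : Fin n) :
    ofPerm hA hB σ i j = false := by
  change Function.swap (ofPerm hA hB σ) j i = false
  rw [swap_ofPerm, ofPerm_eq_false_of_notMem_left _ _ _ hj]

theorem rowsOf_ofPerm : rowsOf (ofPerm hA hB σ) = A := by
  ext i
  simp only [rowsOf, mem_filter, mem_univ, true_and]
  constructor
  · rintro ⟨j, hj⟩
    by_contra hi
    simp [ofPerm_eq_false_of_notMem_left hA hB σ hi] at hj
  · intro hi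
    obtain ⟨s, rfl⟩ := exists_orderEmbOfFin_eq hA hi
    exact ⟨_, (ofPerm_orderEmbOfFin_left hA hB σ s _).mpr rfl⟩

theorem colsOf_ofPerm : colsOf (ofPerm hA hB σ) = B := by
  rw [colsOf, swap_ofPerm, rowsOf_ofPerm]

theorem isPP_ofPerm : isPP (ofPerm hA hB σ) := by
  constructor
  · intro i j j' hj hj'
    obtain ⟨s, rfl, rfl⟩ := (ofPerm_eq_true_iff hA hB σ).mp hj
    exact (ofPerm_orderEmbOfFin_left hA hB σ s j').mp hj'
  · intro i i' j hi hi'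
    obtain ⟨s, rfl, rfl⟩ := (ofPerm_eq_true_iff hA hB σ).mp hi
    simpa using (ofPerm_orderEmbOfFin_right hA hB σ _ i').mp hi'

theorem ofPerm_injective : Function.Injective (ofPerm hA hB) := by
  intro σ τ h
  refine Equiv.ext fun s => ?_
  have hs := (ofPerm_orderEmbOfFin_left hA hB σ s _).mpr rfl
  rw [h, ofPerm_orderEmbOfFin_left] at hs
  simpa using hs.symm

theorem exists_ofPerm_eq {M : Fin n → Fin n → Bool} (hM : isPP M) (hr : rowsOf M = A)
    (hc : colsOf M = B) : ∃ σ, ofPerm hA hB σ = M := by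
  have hcol (s : Fin m) : ∃ t, M (A.orderEmbOfFin hA s) (B.orderEmbOfFin hB t) = true := by
    have hs : A.orderEmbOfFin hA s ∈ rowsOf M := hr ▸ orderEmbOfFin_mem A hA s
    obtain ⟨j, hj⟩ := (mem_filter.mp hs).2
    have hjB : j ∈ colsOf M := mem_filter.mpr ⟨mem_univ _, _, hj⟩
    obtain ⟨t, rfl⟩ := exists_orderEmbOfFin_eq hB (hc ▸ hjB)
    exact ⟨t, hj⟩
  choose g hg using hcol
  have hg_inj : Function.Injective g := fun s s' h =>
    (A.orderEmbOfFin hA).injective (hM.2 _ _ _ (hg s) (h ▸ hg s'))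
  refine ⟨Equiv.ofBijective g (Finite.injective_iff_bijective.mp hg_inj), ?_⟩
  funext i j
  rw [Bool.eq_iff_iff, ofPerm_eq_true_iff]
  constructor
  · rintro ⟨s, rfl, rfl⟩
    exact hg s
  · intro hij
    have hi : i ∈ rowsOf M := mem_filter.mpr ⟨mem_univ _, j, hij⟩
    obtain ⟨s, rfl⟩ := exists_orderEmbOfFin_eq hA (hr ▸ hi)
    exact ⟨s, rfl, hM.1 _ _ _ (hg s) hij⟩

theorem forall_lt_ofPerm_left_eq_false (s : Fin m) (j : Fin n) :
    (∀ j' < j, ofPerm hA hB σ (A.orderEmbOfFin hA s) j' = false) ↔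
      j ≤ B.orderEmbOfFin hB (σ s) := by
  simp only [← Bool.not_eq_true, ofPerm_orderEmbOfFin_left]
  constructor
  · intro h
    by_contra hlt
    exact h _ (not_le.mp hlt) rfl
  · rintro h j' hj' rfl
    exact (not_le.mpr hj') h

theorem forall_lt_ofPerm_right_eq_false (t : Fin m) (i : Fin n) :
    (∀ i' < i, ofPerm hA hB σ i' (B.orderEmbOfFin hB t) = false) ↔
      i ≤ A.orderEmbOfFin hA (σ.symm t) := by
  rw [← forall_lt_ofPerm_left_eq_false hB hA σ.symm, ← swap_ofPerm]

theorem isInvCell_ofPerm_left (s : Fin m) (j : Fin n) :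
    IsInvCell (ofPerm hA hB σ) (A.orderEmbOfFin hA s, j) ∧ j ∉ B ↔
      j < B.orderEmbOfFin hB (σ s) ∧ j ∉ B := by
  have hcol := ofPerm_eq_false_of_notMem_right hA hB σ (j := j)
  constructor
  · rintro ⟨⟨-, hleft, -, -⟩, hj⟩
    refine ⟨lt_of_le_of_ne ((forall_lt_ofPerm_left_eq_false hA hB σ s j).mp hleft) ?_, hj⟩
    rintro rfl
    exact hj (orderEmbOfFin_mem B hB _)
  · rintro ⟨hlt, hj⟩
    have hrow := (ofPerm_orderEmbOfFin_left hA hB σ s _).mpr rfl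
    exact ⟨⟨hcol hj _, (forall_lt_ofPerm_left_eq_false hA hB σ s j).mpr hlt.le,
      fun i' _ => hcol hj i', Or.inl ⟨_, hrow⟩⟩, hj⟩

theorem isInvCell_ofPerm (s t : Fin m) :
    IsInvCell (ofPerm hA hB σ) (A.orderEmbOfFin hA s, B.orderEmbOfFin hB t) ↔
      t < σ s ∧ s < σ.symm t := by
  unfold IsInvCell
  dsimp only
  rw [forall_lt_ofPerm_left_eq_false, forall_lt_ofPerm_right_eq_false]
  simp only [← Bool.not_eq_true, ofPerm_orderEmbOfFin_left, OrderEmbedding.le_iff_le,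
    EmbeddingLike.apply_eq_iff_eq, exists_eq', true_or, and_true]
  constructor
  · rintro ⟨hne, hle, hle'⟩
    refine ⟨lt_of_le_of_ne hle fun h => hne h.symm, lt_of_le_of_ne hle' fun h => hne ?_⟩
    rw [h, apply_symm_apply]
  · rintro ⟨hlt, hlt'⟩
    exact ⟨hlt.ne', hlt.le, hlt'.le⟩

theorem rowInv_ofPerm : rowInv (ofPerm hA hB σ) = subsetInv B := by
  have hzero : ∀ i ∈ univ, i ∉ A →
      #{j | IsInvCell (ofPerm hA hB σ) (i, j) ∧ i ∈ A ∧ j ∉ B} = 0 := fun i _ hi => by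
    simp [hi]
  rw [rowInv, rowsOf_ofPerm, colsOf_ofPerm, card_filter_prod_eq_sum,
    ← sum_subset (subset_univ A) hzero, ← sum_orderEmbOfFin A hA, subsetInv,
    ← sum_orderEmbOfFin B hB, ← Equiv.sum_comp σ (fun t => #(Iio (B.orderEmbOfFin hB t) \ B))]
  refine sum_congr rfl fun s _ => congrArg card (ext fun j => ?_)
  rw [mem_sdiff, mem_Iio, ← isInvCell_ofPerm_left hA hB σ s j]
  simp only [mem_filter, mem_univ, orderEmbOfFin_mem, true_and]

theorem crossInv_ofPerm : crossInv (ofPerm hA hB σ) = permInv σ := by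
  rw [crossInv, rowsOf_ofPerm, colsOf_ofPerm, permInv]
  symm
  refine card_nbij (fun q => (A.orderEmbOfFin hA q.1, B.orderEmbOfFin hB (σ q.2))) ?_ ?_ ?_
  · rintro ⟨s, u⟩ hsu
    simp only [coe_filter, mem_univ, true_and, Set.mem_ofPred_eq] at hsu ⊢
    rw [isInvCell_ofPerm, symm_apply_apply]
    exact ⟨⟨hsu.2, hsu.1⟩, orderEmbOfFin_mem A hA s, orderEmbOfFin_mem B hB _⟩
  · rintro ⟨s, u⟩ - ⟨s', u'⟩ - h
    simp only [Prod.mk.injEq, EmbeddingLike.apply_eq_iff_eq] at h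
    rw [h.1, h.2]
  · rintro ⟨i, j⟩ hij
    simp only [coe_filter, mem_univ, true_and, Set.mem_ofPred_eq] at hij
    obtain ⟨hinv, hi, hj⟩ := hij
    obtain ⟨s, rfl⟩ := exists_orderEmbOfFin_eq hA hi
    obtain ⟨t, rfl⟩ := exists_orderEmbOfFin_eq hB hj
    rw [isInvCell_ofPerm] at hinv
    exact ⟨(s, σ.symm t), by simpa using ⟨hinv.2, hinv.1⟩, by simp⟩

theorem invStat_ofPerm :
    invStat (ofPerm hA hB σ) = subsetInv B + permInv σ + subsetInv A := by
  rw [invStat_eq_rowInv_add, rowInv_ofPerm, crossInv_ofPerm, swap_ofPerm, rowInv_ofPerm]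

end OfPerm

theorem zeroRows_le (M : Fin n → Fin n → Bool) : zeroRows M ≤ n := by
  rw [zeroRows_eq]
  exact Nat.sub_le n _

theorem card_rowsOf_of_zeroRows_eq {M : Fin n → Fin n → Bool} {k : ℕ} (h : zeroRows M = k) :
    #(rowsOf M) = n - k := by
  have hle := card_le_univ (rowsOf M)
  rw [Fintype.card_fin] at hle
  rw [zeroRows_eq] at h
  omega

variable {R : Type*} [CommRing R] (q : R)

open scoped Classical in
theorem sum_pow_invStat_fiber {m : ℕ} {A B : Finset (Fin n)} (hA : #A = m) (hB : #B = m) :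
    ∑ M ∈ ({M | isPP M ∧ rowsOf M = A ∧ colsOf M = B} : Finset (Fin n → Fin n → Bool)),
        q ^ invStat M =
      q ^ subsetInv A * q ^ subsetInv B * ∑ σ : Perm (Fin m), q ^ permInv σ := by
  rw [mul_sum]
  symm
  refine sum_nbij (ofPerm hA hB) (fun σ _ => ?_) (ofPerm_injective hA hB).injOn
    (fun M hM => ?_) (fun σ _ => ?_)
  · simpa using ⟨isPP_ofPerm hA hB σ, rowsOf_ofPerm hA hB σ, colsOf_ofPerm hA hB σ⟩
  · simp only [coe_filter, mem_univ, true_and, Set.mem_ofPred_eq] at hM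
    obtain ⟨σ, hσ⟩ := exists_ofPerm_eq hA hB hM.1 hM.2.1 hM.2.2
    exact ⟨σ, by simp, hσ⟩
  · rw [invStat_ofPerm, pow_add, pow_add]
    ring

open scoped Classical in
theorem sum_pow_invStat_of_le {k : ℕ} (hk : k ≤ n) :
    ∑ M ∈ {M : Fin n → Fin n → Bool | isPP M ∧ zeroRows M = k}, q ^ invStat M =
      gbinom q n k ^ 2 * ∏ i ∈ Icc 1 (n - k), ∑ j ∈ range i, q ^ j := by
  set P := (univ : Finset (Fin n)).powersetCard (n - k) with hP
  have hmaps : ∀ M ∈ ({M | isPP M ∧ zeroRows M = k} : Finset (Fin n → Fin n → Bool)),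
      (rowsOf M, colsOf M) ∈ P ×ˢ P := fun M hM => by
    obtain ⟨hPP, hzero⟩ := (mem_filter.mp hM).2
    simp [P, mem_powersetCard, card_colsOf hPP, card_rowsOf_of_zeroRows_eq hzero]
  have hfiber : ∀ A ∈ P, ∀ B ∈ P,
      ∑ M ∈ {M ∈ {M | isPP M ∧ zeroRows M = k} | (rowsOf M, colsOf M) = (A, B)},
          q ^ invStat M =
        q ^ subsetInv A * q ^ subsetInv B * ∑ σ : Perm (Fin (n - k)), q ^ permInv σ := by
    intro A hA B hB
    rw [mem_powersetCard] at hA hB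
    rw [← sum_pow_invStat_fiber q hA.2 hB.2, filter_filter]
    refine sum_congr (filter_congr fun M _ => ?_) fun _ _ => rfl
    rw [Prod.mk.injEq]
    constructor
    · rintro ⟨⟨hPP, -⟩, hr, hc⟩
      exact ⟨hPP, hr, hc⟩
    · rintro ⟨hPP, rfl, hc⟩
      exact ⟨⟨hPP, by rw [zeroRows_eq]; omega⟩, rfl, hc⟩
  rw [← sum_fiberwise_of_maps_to hmaps, sum_product,
    sum_congr rfl fun A hA => sum_congr rfl (hfiber A hA)]
  simp only [← sum_mul, ← sum_mul_sum, sum_pow_permInv, sq]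
  rw [hP, sum_pow_subsetInv q (Nat.sub_le n k), Nat.sub_sub_self hk]

open scoped Classical in
theorem sum_pow_invStat (n k : ℕ) :
    (∑ M : Fin n → Fin n → Bool, if isPP M ∧ zeroRows M = k then q ^ invStat M else 0) =
      gbinom q n k ^ 2 * ∏ i ∈ Icc 1 (n - k), ∑ j ∈ range i, q ^ j := by
  rw [← sum_filter]
  rcases le_or_gt k n with hk | hk
  · exact sum_pow_invStat_of_le q hk
  · rw [gbinom_eq_zero_of_lt q hk, zero_pow two_ne_zero, zero_mul]
    exact sum_eq_zero fun M hM => absurd ((mem_filter.mp hM).2.2 ▸ zeroRows_le M) hk.not_ge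

end PP

open scoped Classical in
theorem stmt2 (n k : ℕ) :
    (∑ M : Fin n → Fin n → Bool,
        if PP.isPP M ∧ PP.zeroRows M = k then (Polynomial.X : Polynomial ℤ) ^ PP.invStat M else 0)
    = PP.gbinom (Polynomial.X : Polynomial ℤ) n k ^ 2 *
        ∏ i ∈ Finset.Icc 1 (n - k), (∑ j ∈ Finset.range i, (Polynomial.X : Polynomial ℤ) ^ j) :=
  PP.sum_pow_invStat Polynomial.X n k
end

section
/- For nonnegative integers n,k, ∑_{π ∈ P(n,k)} w^{rlmin(π)} = C(n,k) · (w+k)(w+k+1)⋯(w+n-1), where the product is the rising factorial from w+k to w+n-1 (and equals 1 when k=n). -/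
/-! Generalize to `m × n` matrices with `m ≤ n` and add the rows one at a time. A partial
permutation matrix with `m` rows and `k` zero rows leaves `n - m + k` columns free. A new last row
is either zero, adding a zero row, or has its 1 in a free column; that 1 is a right-to-left
minimum exactly when every column to its left is already occupied, i.e. in the leftmost free
column. So the sums `T m k` of the weights `w ^ rlmin` satisfy
`T (m + 1) k = T m (k - 1) + (w + (n - m - 1 + k)) * T m k`, solved by
`C(m, k) * (w + n - m + k) ⋯ (w + n - 1)`. -/

namespace Finset

theorem sum_ite_forall_mem_le {α R : Type*} [LinearOrder α] [AddCommMonoidWithOne R]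
    (s : Finset α) (hs : s.Nonempty) (w : R) :
    ∑ j ∈ s, (if ∀ l ∈ s, j ≤ l then w else 1) = w + ((#s - 1 : ℕ) : R) := by
  have hmin : ∀ j ∈ s, (∀ l ∈ s, j ≤ l) ↔ j = s.min' hs := fun j hj =>
    ⟨fun h => le_antisymm (h _ (s.min'_mem hs)) (s.min'_le j hj),
      fun h l hl => h ▸ s.min'_le l hl⟩
  rw [← add_sum_erase s _ (s.min'_mem hs), if_pos ((hmin _ (s.min'_mem hs)).2 rfl),
    sum_congr rfl fun j hj => if_neg ((hmin j (mem_of_mem_erase hj)).not.2 (ne_of_mem_erase hj)),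
    sum_const, card_erase_of_mem (s.min'_mem hs), nsmul_one]

end Finset

namespace PartialPermMatrix
open Finset

variable {m n : ℕ}

def IsPartialPerm (M : Fin m → Fin n → Bool) : Prop :=
  (∀ i j j', M i j = true → M i j' = true → j = j') ∧
  (∀ i i' j, M i j = true → M i' j = true → i = i')

instance : DecidablePred (IsPartialPerm (m := m) (n := n)) := fun _ => by
  unfold IsPartialPerm; infer_instance

def zeroRows (M : Fin m → Fin n → Bool) : ℕ := #{i | ∀ j, M i j = false}

def rlmin (M : Fin m → Fin n → Bool) : ℕ :=
  #{p : Fin m × Fin n | M p.1 p.2 = true ∧ ∀ l < p.2, ∃ i' < p.1, M i' l = true}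

theorem isPartialPerm_snoc_iff (N : Fin m → Fin n → Bool) (a : Fin n → Bool) :
    IsPartialPerm (Fin.snoc N a : Fin (m + 1) → Fin n → Bool) ↔
      IsPartialPerm N ∧ (∀ j j', a j = true → a j' = true → j = j') ∧
        ∀ j, a j = true → ∀ i, N i j = false := by
  simp only [IsPartialPerm, Fin.forall_fin_succ', Fin.snoc_castSucc, Fin.snoc_last,
    Fin.castSucc_inj, Fin.castSucc_ne_last, (Fin.castSucc_ne_last _).symm, imp_false,
    Bool.not_eq_true]
  grind

theorem zeroRows_snoc (N : Fin m → Fin n → Bool) (a : Fin n → Bool) :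
    zeroRows (Fin.snoc N a : Fin (m + 1) → Fin n → Bool) =
      zeroRows N + if ∀ j, a j = false then 1 else 0 := by
  simp only [zeroRows, card_filter, Fin.sum_univ_castSucc, Fin.snoc_castSucc, Fin.snoc_last]

theorem exists_lt_castSucc_snoc (N : Fin m → Fin n → Bool) (a : Fin n → Bool) (i : Fin m)
    (l : Fin n) :
    (∃ i' < i.castSucc, (Fin.snoc N a : Fin (m + 1) → Fin n → Bool) i' l = true) ↔
      ∃ i' < i, N i' l = true := by
  simp [Fin.exists_fin_succ', Fin.castSucc_lt_castSucc_iff, not_lt.2 (Fin.le_last _)]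

theorem exists_lt_last_snoc (N : Fin m → Fin n → Bool) (a : Fin n → Bool) (l : Fin n) :
    (∃ i' < Fin.last m, (Fin.snoc N a : Fin (m + 1) → Fin n → Bool) i' l = true) ↔
      ∃ i, N i l = true := by
  simp [Fin.exists_fin_succ', Fin.castSucc_lt_last]

theorem rlmin_snoc (N : Fin m → Fin n → Bool) (a : Fin n → Bool) :
    rlmin (Fin.snoc N a : Fin (m + 1) → Fin n → Bool) =
      rlmin N + #{j | a j = true ∧ ∀ l < j, ∃ i, N i l = true} := by
  simp only [rlmin, card_filter, Fintype.sum_prod_type, Fin.sum_univ_castSucc, Fin.snoc_castSucc,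
    Fin.snoc_last, exists_lt_castSucc_snoc, exists_lt_last_snoc]

def freeCols (M : Fin m → Fin n → Bool) : Finset (Fin n) := {j | ∀ i, M i j = false}

theorem card_freeCols_add {M : Fin m → Fin n → Bool} (hM : IsPartialPerm M) :
    #(freeCols M) + m = n + zeroRows M := by
  set ones : Finset (Fin m × Fin n) := {p | M p.1 p.2 = true}
  have hrows : ones.image Prod.fst = ({i | ∃ j, M i j = true} : Finset (Fin m)) := by
    ext i; simp [ones]
  have hcols : ones.image Prod.snd = ({j | ∃ i, M i j = true} : Finset (Fin n)) := by
    ext j; simp [ones]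
  have hfst : #(ones.image Prod.fst) = #ones :=
    card_image_of_injOn fun p hp q hq h => by
      simp only [ones, coe_filter, mem_univ, true_and] at hp hq
      exact Prod.ext h (hM.1 _ _ _ hp (h ▸ hq))
  have hsnd : #(ones.image Prod.snd) = #ones :=
    card_image_of_injOn fun p hp q hq h => by
      simp only [ones, coe_filter, mem_univ, true_and] at hp hq
      exact Prod.ext (hM.2 _ _ _ hp (h ▸ hq)) h
  have hr := card_filter_add_card_filter_not (s := univ) fun i => ∀ j, M i j = false
  have hc := card_filter_add_card_filter_not (s := univ) fun j => ∀ i, M i j = false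
  simp only [not_forall, Bool.not_eq_false, card_univ, Fintype.card_fin] at hr hc
  rw [hrows] at hfst
  rw [hcols] at hsnd
  rw [freeCols, zeroRows]
  omega

def optionRow (o : Option (Fin n)) : Fin n → Bool := fun j => decide (o = some j)

theorem optionRow_injective : Function.Injective (optionRow (n := n)) := by
  intro o o' h
  cases o with
  | none => cases o' with
    | none => rfl
    | some j' => simpa [optionRow] using congrFun h j'
  | some j => simpa [optionRow, eq_comm] using congrFun h j

theorem mem_range_optionRow {a : Fin n → Bool}
    (ha : ∀ j j', a j = true → a j' = true → j = j') :
    a ∈ Set.range optionRow := by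
  by_cases h : ∃ j, a j = true
  · obtain ⟨j, hj⟩ := h
    refine ⟨some j, funext fun j' => ?_⟩
    by_cases hj' : a j' = true
    · simp [optionRow, ha j j' hj hj', hj']
    · have hne : j ≠ j' := by rintro rfl; exact hj' hj
      simpa [optionRow, hne] using hj'
  · exact ⟨none, funext fun j => by simp_all [optionRow]⟩

section Weight

variable {R : Type*} [CommSemiring R] (w : R) (k : ℕ)

def weight (M : Fin m → Fin n → Bool) : R :=
  if IsPartialPerm M ∧ zeroRows M = k then w ^ rlmin M else 0

theorem sum_weight_snoc_row (N : Fin m → Fin n → Bool) :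
    ∑ a, weight w k (Fin.snoc N a : Fin (m + 1) → Fin n → Bool) =
      ∑ o, weight w k (Fin.snoc N (optionRow o) : Fin (m + 1) → Fin n → Bool) := by
  refine (Fintype.sum_of_injective _ optionRow_injective _ _ (fun a ha => ?_) fun _ => rfl).symm
  refine if_neg fun h => ha (mem_range_optionRow ?_)
  exact ((isPartialPerm_snoc_iff N a).1 h.1).2.1

theorem weight_snoc_none (N : Fin m → Fin n → Bool) :
    weight w k (Fin.snoc N (optionRow none) : Fin (m + 1) → Fin n → Bool) =
      if k = 0 then 0 else weight w (k - 1) N := by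
  have hp : IsPartialPerm (Fin.snoc N (optionRow none) : Fin (m + 1) → Fin n → Bool) ↔
      IsPartialPerm N := by
    simp [isPartialPerm_snoc_iff, optionRow]
  have hz : zeroRows (Fin.snoc N (optionRow none) : Fin (m + 1) → Fin n → Bool) =
      zeroRows N + 1 := by
    simp [zeroRows_snoc, optionRow]
  have hr : rlmin (Fin.snoc N (optionRow none) : Fin (m + 1) → Fin n → Bool) = rlmin N := by
    simp [rlmin_snoc, optionRow]
  rcases k with _ | k
  · simp [weight, hz]
  · rw [if_neg k.add_one_ne_zero, add_tsub_cancel_right, weight, weight, hz, hr]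
    exact if_congr (and_congr hp Nat.add_right_cancel_iff) rfl rfl

theorem forall_lt_exists_iff_forall_mem_freeCols_le (N : Fin m → Fin n → Bool) (j : Fin n) :
    (∀ l < j, ∃ i, N i l = true) ↔ ∀ l ∈ freeCols N, j ≤ l := by
  simp only [freeCols, mem_filter, mem_univ, true_and]
  refine forall_congr' fun l => ?_
  contrapose!
  simp [and_comm]

theorem weight_snoc_some (N : Fin m → Fin n → Bool) (j : Fin n) :
    weight w k (Fin.snoc N (optionRow (some j)) : Fin (m + 1) → Fin n → Bool) =
      if j ∈ freeCols N then weight w k N * (if ∀ l ∈ freeCols N, j ≤ l then w else 1)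
      else 0 := by
  have hp : IsPartialPerm (Fin.snoc N (optionRow (some j)) : Fin (m + 1) → Fin n → Bool) ↔
      IsPartialPerm N ∧ j ∈ freeCols N := by
    simp [isPartialPerm_snoc_iff, optionRow, freeCols]
  have hz : zeroRows (Fin.snoc N (optionRow (some j)) : Fin (m + 1) → Fin n → Bool) =
      zeroRows N := by
    simp [zeroRows_snoc, optionRow]
  have hr : rlmin (Fin.snoc N (optionRow (some j)) : Fin (m + 1) → Fin n → Bool) =
      rlmin N + if ∀ l ∈ freeCols N, j ≤ l then 1 else 0 := by
    simp [rlmin_snoc, optionRow, forall_lt_exists_iff_forall_mem_freeCols_le, card_filter, ite_and]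
  simp only [weight, hp, hz, hr]
  split_ifs <;> simp_all [pow_succ]

theorem sum_weight_snoc_some (h : m < n) (N : Fin m → Fin n → Bool) :
    ∑ j, weight w k (Fin.snoc N (optionRow (some j)) : Fin (m + 1) → Fin n → Bool) =
      (w + ((n - m - 1 + k : ℕ) : R)) * weight w k N := by
  simp only [weight_snoc_some, Fintype.sum_ite_mem]
  by_cases hN : IsPartialPerm N ∧ zeroRows N = k
  · have hcard := card_freeCols_add hN.1
    have hne : (freeCols N).Nonempty := card_pos.1 (by omega)
    have hcount : #(freeCols N) - 1 = n - m - 1 + k := by omega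
    rw [← mul_sum, mul_comm, ← hcount]
    congr 1
    convert sum_ite_forall_mem_le _ hne w
  · simp [weight, hN]

theorem sum_weight_snoc (h : m < n) :
    ∑ M : Fin (m + 1) → Fin n → Bool, weight w k M =
      (if k = 0 then 0 else ∑ N : Fin m → Fin n → Bool, weight w (k - 1) N) +
        (w + ((n - m - 1 + k : ℕ) : R)) * ∑ N : Fin m → Fin n → Bool, weight w k N := by
  rw [← Fintype.sum_equiv (Fin.snocEquiv fun _ => Fin n → Bool)
    (fun p => weight w k (Fin.snoc p.2 p.1 : Fin (m + 1) → Fin n → Bool)) _ fun _ => rfl,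
    Fintype.sum_prod_type, sum_comm]
  simp only [sum_weight_snoc_row, Fintype.sum_option, weight_snoc_none,
    sum_weight_snoc_some w k h, sum_add_distrib, ← mul_sum]
  split_ifs <;> simp

theorem sum_weight_eq (h : m ≤ n) :
    ∑ M : Fin m → Fin n → Bool, weight w k M =
      m.choose k * ∏ i ∈ Ico (n - m + k) n, (w + i) := by
  induction m generalizing k with
  | zero =>
    rcases k with _ | k <;> simp [weight, IsPartialPerm, zeroRows, rlmin]
  | succ m ih =>
    rw [sum_weight_snoc w k (by omega), ih k (by omega)]
    rcases k with _ | k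
    · have hbot : n - (m + 1) + 1 = n - m := by omega
      simp only [reduceIte, zero_add, add_zero, Nat.choose_zero_right, Nat.cast_one, one_mul]
      rw [prod_eq_prod_Ico_succ_bot (a := n - (m + 1)) (by omega), hbot, Nat.sub_sub]
    · rw [if_neg k.add_one_ne_zero, add_tsub_cancel_right, ih k (by omega),
        Nat.choose_succ_succ', show n - (m + 1) + (k + 1) = n - m + k by omega,
        show n - m - 1 + (k + 1) = n - m + k by omega,
        show n - m + (k + 1) = n - m + k + 1 by omega]
      rcases lt_or_ge (n - m + k) n with hlt | hge
      · rw [prod_eq_prod_Ico_succ_bot hlt]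
        push_cast
        ring
      · rw [Nat.choose_eq_zero_of_lt (by omega : m < k + 1)]
        simp

end Weight

end PartialPermMatrix

open scoped Classical in
theorem stmt3 (n k : ℕ) :
    (∑ M : Fin n → Fin n → Bool,
        if PP.isPP M ∧ PP.zeroRows M = k then (Polynomial.X : Polynomial ℤ) ^ PP.rlminStat M else 0)
    = (n.choose k : Polynomial ℤ) *
        ∏ i ∈ Finset.Ico k n, (Polynomial.X + (i : Polynomial ℤ)) := by
  have h := PartialPermMatrix.sum_weight_eq (Polynomial.X : Polynomial ℤ) k (le_refl n)
  rw [Nat.sub_self, zero_add] at h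
  rw [← h]
  exact Finset.sum_congr rfl fun M _ => if_congr Iff.rfl rfl rfl
end

section
/- For nonnegative integers n,k and any 1 ≤ i ≤ n-k, the number of partial permutations in P(n,k) with exactly i excedances equals the number of partial permutations in P(n,k) with exactly n-k-i weak excedances. -/
/-! Rotating a matrix by 180 degrees, `(i, j) ↦ (n-1-i, n-1-j)`, preserves partial permutations
and their number of zero rows, and turns the 1s strictly above the diagonal into 1s strictly
below it. Hence `exc M + wex (rot180 M)` counts all 1s of `M`, which number `n - k`. -/

namespace PP

open Finset

variable {n : ℕ}

def rot180 (M : Fin n → Fin n → Bool) : Fin n → Fin n → Bool :=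
  fun i j => M i.rev j.rev

lemma rot180_involutive : Function.Involutive (rot180 (n := n)) := fun M => by
  funext i j
  simp [rot180]

lemma isPP_rot180 {M : Fin n → Fin n → Bool} (hM : isPP M) : isPP (rot180 M) :=
  ⟨fun _ _ _ hj hj' => Fin.rev_injective (hM.1 _ _ _ hj hj'),
    fun _ _ _ hi hi' => Fin.rev_injective (hM.2 _ _ _ hi hi')⟩

lemma isPP_rot180_iff {M : Fin n → Fin n → Bool} : isPP (rot180 M) ↔ isPP M :=
  ⟨fun h => rot180_involutive M ▸ isPP_rot180 h, isPP_rot180⟩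

lemma zeroRows_rot180 (M : Fin n → Fin n → Bool) : zeroRows (rot180 M) = zeroRows M :=
  card_equiv Fin.revPerm fun i => by
    rw [mem_filter, mem_filter]
    simp only [mem_univ, true_and, rot180, Fin.revPerm_apply]
    exact (Fin.rev_surjective.forall (p := fun j => M i.rev j = false)).symm

def support (M : Fin n → Fin n → Bool) : Finset (Fin n × Fin n) :=
  univ.filter fun p => M p.1 p.2 = true

lemma card_support {M : Fin n → Fin n → Bool}
    (hrow : ∀ i j j', M i j = true → M i j' = true → j = j') :
    #(support M) = n - zeroRows M := by
  have hrows : zeroRows M + #(univ.filter fun i : Fin n => ¬ ∀ j, M i j = false) = n := by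
    rw [zeroRows, card_filter_add_card_filter_not, card_univ, Fintype.card_fin]
  suffices #(support M) = #(univ.filter fun i : Fin n => ¬ ∀ j, M i j = false) by omega
  refine card_bij (fun p _ => p.1) (fun p hp => ?_) (fun p hp q hq hpq => ?_) (fun i hi => ?_)
  · simp only [support, mem_filter, mem_univ, true_and, not_forall, Bool.not_eq_false] at hp ⊢
    exact ⟨p.2, hp⟩
  · simp only [support, mem_filter, mem_univ, true_and] at hp hq
    exact Prod.ext hpq (hrow _ _ _ hp (hpq ▸ hq))
  · simp only [mem_filter, mem_univ, true_and, not_forall, Bool.not_eq_false] at hi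
    obtain ⟨j, hj⟩ := hi
    exact ⟨(i, j), by simpa [support] using hj, rfl⟩

lemma excStat_add_wexStat_rot180 (M : Fin n → Fin n → Bool) :
    excStat M + wexStat (rot180 M) = #(support M) := by
  have hexc : excStat M = #((support M).filter fun p => p.1 < p.2) := by
    rw [support, filter_filter]
    rfl
  have hwex : wexStat (rot180 M) = #((support M).filter fun p => ¬ p.1 < p.2) := by
    rw [support, filter_filter]
    refine card_equiv (Fin.revPerm.prodCongr Fin.revPerm) fun p => ?_
    rw [mem_filter, mem_filter]
    simp [rot180]
  rw [hexc, hwex, card_filter_add_card_filter_not]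

end PP


theorem stmt5_general (n k i : ℕ) (h2 : i ≤ n - k) :
    Nat.card {M : Fin n → Fin n → Bool // PP.isPP M ∧ PP.zeroRows M = k ∧ PP.excStat M = i}
    = Nat.card {M : Fin n → Fin n → Bool //
        PP.isPP M ∧ PP.zeroRows M = k ∧ PP.wexStat M = n - k - i} := by
  refine Nat.card_congr (Equiv.subtypeEquiv (PP.rot180_involutive.toPerm _) fun M => ?_)
  simp only [Function.Involutive.coe_toPerm, PP.isPP_rot180_iff, PP.zeroRows_rot180]
  refine and_congr_right fun hM => and_congr_right fun hk => ?_
  have hsum := PP.excStat_add_wexStat_rot180 M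
  rw [PP.card_support hM.1, hk] at hsum
  omega

theorem stmt5 (n k i : ℕ) (h1 : 1 ≤ i) (h2 : i ≤ n - k) :
    Nat.card {M : Fin n → Fin n → Bool // PP.isPP M ∧ PP.zeroRows M = k ∧ PP.excStat M = i}
    = Nat.card {M : Fin n → Fin n → Bool //
        PP.isPP M ∧ PP.zeroRows M = k ∧ PP.wexStat M = n - k - i} :=
  stmt5_general n k i h2
end

section
/- The map φ sending an n×n (0,1)-matrix π to its rotation by 180° (i.e., φ(π)_{i,j} = π_{n+1-i,n+1-j}) is a bijection from P(n,k) to itself satisfying wex(φ(π)) = n - k - exc(π). -/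
def rot {n : ℕ} (M : Fin n → Fin n → Bool) : Fin n → Fin n → Bool :=
  fun i j => M i.rev j.rev


/- Rotation by 180° is an involution that keeps at most one 1 in each row and column and maps
zero rows to zero rows, so it permutes P(n,k). It moves a 1 at (i,j) to (n+1-i, n+1-j), so the
weak excedances of φ(π) correspond to the 1s of π on or below the diagonal. Since π has exactly
n - k ones and those above the diagonal are its excedances, wex(φ(π)) = n - k - exc(π). -/

open Finset

lemma rot_involutive {n : ℕ} : Function.Involutive (rot (n := n)) := by
  intro M
  funext i j
  simp [rot]

lemma isPP_rot {n : ℕ} {M : Fin n → Fin n → Bool} (h : PP.isPP M) : PP.isPP (rot M) :=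
  ⟨fun _ _ _ hj hj' => Fin.rev_injective (h.1 _ _ _ hj hj'),
    fun _ _ _ hi hi' => Fin.rev_injective (h.2 _ _ _ hi hi')⟩

lemma zeroRows_rot {n : ℕ} (M : Fin n → Fin n → Bool) : PP.zeroRows (rot M) = PP.zeroRows M := by
  refine card_equiv Fin.revPerm fun i => ?_
  simp only [mem_filter, mem_univ, true_and]
  exact (Fin.rev_surjective.forall (p := fun j => M i.rev j = false)).symm

lemma wexStat_rot {n : ℕ} (M : Fin n → Fin n → Bool) :
    PP.wexStat (rot M) = #{p : Fin n × Fin n | M p.1 p.2 = true ∧ p.2 ≤ p.1} := by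
  refine card_equiv (Fin.revPerm.prodCongr Fin.revPerm) fun p => ?_
  simp only [mem_filter, mem_univ, true_and]
  simp [rot, Fin.rev_le_rev]

lemma card_ones_add_zeroRows {n : ℕ} {M : Fin n → Fin n → Bool}
    (h : ∀ i j j', M i j = true → M i j' = true → j = j') :
    #{p : Fin n × Fin n | M p.1 p.2 = true} + PP.zeroRows M = n := by
  have ones_eq_nonzero_rows :
      #{p : Fin n × Fin n | M p.1 p.2 = true} = #{i : Fin n | ∃ j, M i j = true} := by
    refine card_bij (fun p _ => p.1) (fun p hp => by simpa using ⟨p.2, (mem_filter.mp hp).2⟩)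
      (fun p hp q hq hpq => ?_) (by simp)
    simp only [mem_filter, mem_univ, true_and] at hp hq
    exact Prod.ext hpq (h _ _ _ hp (hpq ▸ hq))
  have zeroRows_eq : PP.zeroRows M = #{i : Fin n | ¬ ∃ j, M i j = true} := by
    simp [PP.zeroRows]
  rw [ones_eq_nonzero_rows, zeroRows_eq, card_filter_add_card_filter_not, card_univ,
    Fintype.card_fin]

lemma excStat_add_card_ones_on_or_below_diag {n : ℕ} (M : Fin n → Fin n → Bool) :
    PP.excStat M + #{p : Fin n × Fin n | M p.1 p.2 = true ∧ p.2 ≤ p.1}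
      = #{p : Fin n × Fin n | M p.1 p.2 = true} := by
  conv_rhs => rw [← card_filter_add_card_filter_not (fun p : Fin n × Fin n => p.1 < p.2),
    filter_filter, filter_filter]
  simp only [not_lt, PP.excStat]

theorem stmt6 (n k : ℕ) :
    Set.BijOn (rot (n := n))
      {M | PP.isPP M ∧ PP.zeroRows M = k} {M | PP.isPP M ∧ PP.zeroRows M = k} ∧
    ∀ M : Fin n → Fin n → Bool, PP.isPP M ∧ PP.zeroRows M = k →
      PP.wexStat (rot M) = n - k - PP.excStat M := by
  have maps : Set.MapsTo rot {M | PP.isPP M ∧ PP.zeroRows M = k}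
      {M : Fin n → Fin n → Bool | PP.isPP M ∧ PP.zeroRows M = k} :=
    fun M ⟨hM, hk⟩ => ⟨isPP_rot hM, (zeroRows_rot M).trans hk⟩
  refine ⟨Set.InvOn.bijOn ⟨fun M _ => rot_involutive M, fun M _ => rot_involutive M⟩ maps maps,
    ?_⟩
  rintro M ⟨hM, rfl⟩
  have h₁ := card_ones_add_zeroRows hM.1
  have h₂ := excStat_add_card_ones_on_or_below_diag M
  rw [wexStat_rot]
  omega
end

section
/- Let a(n,k) be defined by a(0,0)=1, a(0,k)=0 for k>0, and a(n,k) = a(n-1,k-1) + s_k·a(n-1,k) + t_{k+1}·a(n-1,k+1) with s_0 = w, s_ℓ = 2ℓ + w for ℓ ≥ 1, and t_ℓ = ℓ(ℓ-1+w). Then a(n,k) = ∑_{π ∈ P(n,k)} w^{rlmin(π)} as polynomials in w. -/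
/-!
Delete the last row and the last column of a partial permutation matrix of order `n + 1`. What
remains is a partial permutation `π'` of order `n`; the last column can carry a 1 only in a zero
row of `π'`, and the last row only in a zero column of the `n × (n + 1)` matrix obtained by
appending that column to `π'`. Appending the column never changes `rlmin`: if its 1 lies in a zero
row, then `π'` also has a zero column, and that column lies to the left. A 1 in the last row counts
for `rlmin` exactly when it sits in the leftmost zero column, so `m` zero columns contribute
`(m - 1) + w`. As a partial permutation has as many zero rows as zero columns, summing over the
choices gives the three terms of the recurrence.
-/

open Finset

namespace PP

section AtMostOneTrue

variable {α : Type*}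

def AtMostOneTrue (v : α → Bool) : Prop :=
  ∀ a b, v a = true → v b = true → a = b

lemma atMostOneTrue_snoc {m : ℕ} {v : Fin m → Bool} {x : Bool} :
    AtMostOneTrue (Fin.snoc v x : Fin (m + 1) → Bool) ↔
      AtMostOneTrue v ∧ (x = true → ∀ i, v i = false) := by
  simp only [AtMostOneTrue, Fin.forall_fin_succ', Fin.snoc_castSucc, Fin.snoc_last,
    Fin.castSucc_inj]
  grind

lemma sum_fun_bool_of_atMostOneTrue [Fintype α] [DecidableEq α] {β : Type*} [AddCommMonoid β]
    (f : (α → Bool) → β) (hf : ∀ g, ¬ AtMostOneTrue g → f g = 0) :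
    ∑ g, f g = f (fun _ => false) + ∑ a, f (fun x => decide (x = a)) := by
  let φ : Option α → α → Bool := fun o x => decide (some x = o)
  have hφ : Function.Injective φ := by
    intro o o' h
    cases o <;> cases o' <;> simp_all [φ, funext_iff]
  have hrange : ∀ g, AtMostOneTrue g → g ∈ univ.image φ := by
    intro g hg
    by_cases h0 : ∃ a, g a = true
    · obtain ⟨a, ha⟩ := h0
      refine mem_image.2 ⟨some a, mem_univ _, funext fun x => ?_⟩
      by_cases hx : g x = true
      · simp [φ, hg _ _ ha hx, hx]
      · have hxa : x ≠ a := by rintro rfl; exact hx ha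
        simp_all [φ]
    · refine mem_image.2 ⟨none, mem_univ _, funext fun x => ?_⟩
      simp_all [φ]
  rw [← sum_subset (subset_univ (univ.image φ)) fun g _ hg => hf g fun h => hg (hrange g h),
    sum_image fun _ _ _ _ h => hφ h, Fintype.sum_option]
  simp [φ]

end AtMostOneTrue

section Matrix

variable {ι κ : Type*}

def IsPartialPermMatrix (M : ι → κ → Bool) : Prop :=
  (∀ i, AtMostOneTrue (M i)) ∧ ∀ j, AtMostOneTrue fun i => M i j

variable [Fintype ι] [Fintype κ]

def zeroRowSet (M : ι → κ → Bool) : Finset ι := univ.filter fun i => ∀ j, M i j = false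

def zeroColSet (M : ι → κ → Bool) : Finset κ := univ.filter fun j => ∀ i, M i j = false

def rlmin [LinearOrder ι] [LinearOrder κ] (M : ι → κ → Bool) : ℕ :=
  #(univ.filter fun p : ι × κ => M p.1 p.2 = true ∧ ∀ l < p.2, ∃ i' < p.1, M i' l = true)

lemma card_zeroRowSet_add_card {M : ι → κ → Bool} (hM : IsPartialPermMatrix M) :
    #(zeroRowSet M) + Fintype.card κ = #(zeroColSet M) + Fintype.card ι := by
  classical
  set ones := univ.filter fun p : ι × κ => M p.1 p.2 = true
  have hrows : #(zeroRowSet M) + #ones = Fintype.card ι := by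
    have himage : ones.image Prod.fst = (zeroRowSet M)ᶜ := by
      ext i; simp [ones, zeroRowSet]
    rw [← card_image_of_injOn (s := ones) (f := Prod.fst), himage, card_add_card_compl]
    rintro ⟨i, j⟩ hij ⟨i', j'⟩ hij' (rfl : i = i')
    simp only [coe_filter, mem_univ, true_and, Set.mem_ofPred_eq, ones] at hij hij'
    rw [hM.1 i j j' hij hij']
  have hcols : #(zeroColSet M) + #ones = Fintype.card κ := by
    have himage : ones.image Prod.snd = (zeroColSet M)ᶜ := by
      ext j; simp [ones, zeroColSet]
    rw [← card_image_of_injOn (s := ones) (f := Prod.snd), himage, card_add_card_compl]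
    rintro ⟨i, j⟩ hij ⟨i', j'⟩ hij' (rfl : j = j')
    simp only [coe_filter, mem_univ, true_and, Set.mem_ofPred_eq, ones] at hij hij'
    rw [hM.2 j i i' hij hij']
  omega

end Matrix

section RowExtension

variable {κ : Type*} [Fintype κ] {m : ℕ} (N : Fin m → κ → Bool) (r : κ → Bool)

lemma isPartialPermMatrix_snoc_iff :
    IsPartialPermMatrix (Fin.snoc N r : Fin (m + 1) → κ → Bool) ↔
      IsPartialPermMatrix N ∧ AtMostOneTrue r ∧ ∀ j, r j = true → j ∈ zeroColSet N := by
  have hcol : ∀ j, (fun i => (Fin.snoc N r : Fin (m + 1) → κ → Bool) i j) =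
      Fin.snoc (fun i => N i j) (r j) := by
    intro j; funext i; refine Fin.lastCases ?_ (fun i => ?_) i <;> simp
  simp only [IsPartialPermMatrix, hcol, atMostOneTrue_snoc, Fin.forall_fin_succ',
    Fin.snoc_castSucc, Fin.snoc_last, zeroColSet, mem_filter, mem_univ, true_and, forall_and]
  tauto

lemma card_zeroRowSet_snoc :
    #(zeroRowSet (Fin.snoc N r : Fin (m + 1) → κ → Bool)) =
      #(zeroRowSet N) + if ∀ j, r j = false then 1 else 0 := by
  simp only [zeroRowSet, card_filter, Fin.sum_univ_castSucc, Fin.snoc_castSucc, Fin.snoc_last]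

lemma rlmin_snoc [LinearOrder κ] :
    rlmin (Fin.snoc N r : Fin (m + 1) → κ → Bool) =
      rlmin N + #(univ.filter fun j => r j = true ∧ ∀ l < j, l ∉ zeroColSet N) := by
  have hlast (i : Fin m) : ¬ Fin.last m < i.castSucc := (Fin.castSucc_lt_last i).not_gt
  simp only [rlmin, card_filter, Fintype.sum_prod_type, Fin.sum_univ_castSucc, Fin.snoc_castSucc,
    Fin.snoc_last, Fin.exists_fin_succ', Fin.castSucc_lt_castSucc_iff, hlast, Fin.castSucc_lt_last,
    lt_self_iff_false, false_and, true_and, or_false, zeroColSet, mem_filter, mem_univ, not_forall,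
    Bool.not_eq_false]
  -- the remaining summands differ only in their `Decidable` instances
  exact congrArg (· + _) (sum_congr rfl fun i _ => sum_congr rfl fun j _ => by congr 1)

end RowExtension

section ColumnExtension

variable {ι : Type*} [Fintype ι] {p : ℕ}

def appendCol (N : ι → Fin p → Bool) (c : ι → Bool) : ι → Fin (p + 1) → Bool :=
  fun i => Fin.snoc (N i) (c i)

def appendColEquiv : (ι → Fin p → Bool) × (ι → Bool) ≃ (ι → Fin (p + 1) → Bool) where
  toFun x := appendCol x.1 x.2
  invFun N := (fun i => Fin.init (N i), fun i => N i (Fin.last p))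
  left_inv x := by simp [appendCol]
  right_inv N := by funext i; simp [appendCol]

variable (N : ι → Fin p → Bool) (c : ι → Bool)

lemma isPartialPermMatrix_appendCol_iff :
    IsPartialPermMatrix (appendCol N c) ↔
      IsPartialPermMatrix N ∧ AtMostOneTrue c ∧ ∀ i, c i = true → i ∈ zeroRowSet N := by
  simp only [IsPartialPermMatrix, appendCol, atMostOneTrue_snoc, Fin.forall_fin_succ',
    Fin.snoc_castSucc, Fin.snoc_last, zeroRowSet, mem_filter, mem_univ, true_and, forall_and]
  tauto

lemma zeroRowSet_appendCol :
    zeroRowSet (appendCol N c) = (zeroRowSet N).filter fun i => c i = false := by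
  ext i
  simp [zeroRowSet, appendCol, Fin.forall_fin_succ']

lemma rlmin_appendCol [LinearOrder ι] :
    rlmin (appendCol N c) =
      rlmin N + #(univ.filter fun i => c i = true ∧ ∀ l, ∃ i' < i, N i' l = true) := by
  have hlast (j : Fin p) : ¬ Fin.last p < j.castSucc := (Fin.castSucc_lt_last j).not_gt
  simp only [rlmin, appendCol, card_filter, Fintype.sum_prod_type, Fin.sum_univ_castSucc,
    Fin.snoc_castSucc, Fin.snoc_last, Fin.forall_fin_succ', Fin.castSucc_lt_castSucc_iff, hlast,
    Fin.castSucc_lt_last, sum_add_distrib, false_imp_iff, true_imp_iff, lt_self_iff_false, and_true]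
  exact congrArg₂ (· + ·) (sum_congr rfl fun i _ => sum_congr rfl fun j _ => by congr 1)
    (sum_congr rfl fun i _ => by congr 1)

end ColumnExtension

lemma sum_bool_matrix_succ {β : Type*} [AddCommMonoid β] {m p : ℕ}
    (F : (Fin (m + 1) → Fin (p + 1) → Bool) → β) :
    ∑ M, F M = ∑ N : Fin m → Fin p → Bool, ∑ c : Fin m → Bool, ∑ r : Fin (p + 1) → Bool,
      F (Fin.snoc (appendCol N c) r) := by
  rw [← (Fin.snocEquiv fun _ => Fin (p + 1) → Bool).sum_comp, Fintype.sum_prod_type, sum_comm,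
    ← appendColEquiv.sum_comp, Fintype.sum_prod_type]
  rfl

lemma sum_ite_forall_lt_notMem {α R : Type*} [Fintype α] [LinearOrder α] [CommRing R]
    {S : Finset α} (hS : S.Nonempty) (x : R) :
    ∑ j ∈ S, (if ∀ l < j, l ∉ S then x else 1) = (#S : R) - 1 + x := by
  have hmin : ∀ j ∈ S, (∀ l < j, l ∉ S) ↔ j = S.min' hS := fun j hj =>
    ⟨fun h => le_antisymm (not_lt.1 fun hlt => h _ hlt (S.min'_mem hS)) (S.min'_le j hj),
      fun h l hl hlS => (S.min'_le l hlS).not_gt (h ▸ hl)⟩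
  rw [sum_congr rfl fun j hj => if_congr (hmin j hj) rfl rfl, ← add_sum_erase _ _ (S.min'_mem hS),
    if_pos rfl, sum_congr rfl fun j hj => if_neg (ne_of_mem_erase hj), sum_const,
    card_erase_of_mem (S.min'_mem hS), nsmul_one, Nat.cast_pred hS.card_pos]
  ring

section Weight

variable {R : Type*} [CommRing R] (w : R)

open scoped Classical in
noncomputable def weight {ι κ : Type*} [Fintype ι] [Fintype κ] [LinearOrder ι] [LinearOrder κ]
    (k : ℕ) (M : ι → κ → Bool) : R :=
  if IsPartialPermMatrix M ∧ #(zeroRowSet M) = k then w ^ rlmin M else 0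

lemma sum_weight_snoc {κ : Type*} [Fintype κ] [LinearOrder κ] {m : ℕ} (k : ℕ)
    {N : Fin m → κ → Bool} (hN : IsPartialPermMatrix N) (hcol : (zeroColSet N).Nonempty) :
    ∑ r : κ → Bool, weight w k (Fin.snoc N r : Fin (m + 1) → κ → Bool) =
      (if #(zeroRowSet N) + 1 = k then w ^ rlmin N else 0) +
        if #(zeroRowSet N) = k then ((#(zeroColSet N) : R) - 1 + w) * w ^ rlmin N else 0 := by
  rw [sum_fun_bool_of_atMostOneTrue _ fun r hr => by
    simp [weight, isPartialPermMatrix_snoc_iff, hr]]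
  congr 1
  · simp [weight, isPartialPermMatrix_snoc_iff, hN, card_zeroRowSet_snoc, rlmin_snoc, AtMostOneTrue]
  · have hj : ∀ j, weight w k (Fin.snoc N fun x => decide (x = j) : Fin (m + 1) → κ → Bool) =
        if j ∈ zeroColSet N then
          if #(zeroRowSet N) = k then (if ∀ l < j, l ∉ zeroColSet N then w else 1) * w ^ rlmin N
          else 0
        else 0 := by
      intro j
      by_cases hj : j ∈ zeroColSet N <;>
        simp [weight, isPartialPermMatrix_snoc_iff, hN, hj, card_zeroRowSet_snoc, rlmin_snoc,
          AtMostOneTrue, card_filter, ite_and]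
      split_ifs <;> ring
    rw [sum_congr rfl fun j _ => hj j, sum_ite_mem, univ_inter]
    split_ifs
    · rw [← sum_mul, sum_ite_forall_lt_notMem hcol]
    · simp

lemma sum_weight_snoc_appendCol {n : ℕ} (k : ℕ) {M : Fin n → Fin n → Bool} {c : Fin n → Bool}
    (hc : IsPartialPermMatrix (appendCol M c)) :
    ∑ r : Fin (n + 1) → Bool,
        weight w k (Fin.snoc (appendCol M c) r : Fin (n + 1) → Fin (n + 1) → Bool) =
      (if #(zeroRowSet (appendCol M c)) + 1 = k then w ^ rlmin M else 0) +
        if #(zeroRowSet (appendCol M c)) = k then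
          ((#(zeroRowSet (appendCol M c)) : R) + w) * w ^ rlmin M
        else 0 := by
  obtain ⟨hM, -, hcM⟩ := (isPartialPermMatrix_appendCol_iff M c).1 hc
  have hcard := card_zeroRowSet_add_card hc
  have hsquare := card_zeroRowSet_add_card hM
  simp only [Fintype.card_fin] at hcard hsquare
  have hrlmin : rlmin (appendCol M c) = rlmin M := by
    rw [rlmin_appendCol, add_eq_left, card_eq_zero, eq_empty_iff_forall_notMem]
    intro i hi
    simp only [mem_filter, mem_univ, true_and] at hi
    have hrow : 0 < #(zeroRowSet M) := card_pos.2 ⟨i, hcM i hi.1⟩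
    obtain ⟨l, hl⟩ := card_pos.1 (show 0 < #(zeroColSet M) by omega)
    obtain ⟨i', -, hi'⟩ := hi.2 l
    simp only [zeroColSet, mem_filter, mem_univ, true_and] at hl
    simp [hl i'] at hi'
  rw [sum_weight_snoc w k hc (card_pos.1 (by omega)), hrlmin,
    show #(zeroColSet (appendCol M c)) = #(zeroRowSet (appendCol M c)) + 1 by omega,
    Nat.cast_succ, add_sub_cancel_right]

open scoped Classical in
lemma sum_sum_weight_snoc_appendCol {n : ℕ} (k : ℕ) (M : Fin n → Fin n → Bool) :
    ∑ c : Fin n → Bool, ∑ r : Fin (n + 1) → Bool,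
        weight w k (Fin.snoc (appendCol M c) r : Fin (n + 1) → Fin (n + 1) → Bool) =
      (if k = 0 then 0 else weight w (k - 1) M) + (((2 * k : ℕ) : R) + w) * weight w k M +
        (((k + 1 : ℕ) : R) * ((k : ℕ) + w)) * weight w (k + 1) M := by
  by_cases hM : IsPartialPermMatrix M
  swap
  · simp [weight, isPartialPermMatrix_snoc_iff, isPartialPermMatrix_appendCol_iff, hM]
  obtain ⟨z, hz⟩ : ∃ z, #(zeroRowSet M) = z := ⟨_, rfl⟩
  let g : ℕ → R := fun a =>
    (if a + 1 = k then w ^ rlmin M else 0) + if a = k then ((a : R) + w) * w ^ rlmin M else 0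
  have hcol : ∀ c, ∑ r : Fin (n + 1) → Bool,
      weight w k (Fin.snoc (appendCol M c) r : Fin (n + 1) → Fin (n + 1) → Bool) =
        if IsPartialPermMatrix (appendCol M c) then g #(zeroRowSet (appendCol M c)) else 0 := by
    intro c
    split_ifs with hc
    · exact sum_weight_snoc_appendCol w k hc
    · exact sum_eq_zero fun r _ => by simp [weight, isPartialPermMatrix_snoc_iff, hc]
  have hempty : IsPartialPermMatrix (appendCol M fun _ => false) ∧
      zeroRowSet (appendCol M fun _ => false) = zeroRowSet M := by
    simp [isPartialPermMatrix_appendCol_iff, hM, AtMostOneTrue, zeroRowSet_appendCol]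
  have hsingle : ∀ i, (if IsPartialPermMatrix (appendCol M fun x => decide (x = i))
      then g #(zeroRowSet (appendCol M fun x => decide (x = i))) else 0) =
        if i ∈ zeroRowSet M then g (z - 1) else 0 := by
    intro i
    by_cases hi : i ∈ zeroRowSet M <;>
      simp [isPartialPermMatrix_appendCol_iff, hM, AtMostOneTrue, zeroRowSet_appendCol, hi,
        filter_ne', card_erase_of_mem, hz]
  rw [sum_congr rfl fun c _ => hcol c, sum_fun_bool_of_atMostOneTrue _ fun c hc => by
      simp [isPartialPermMatrix_appendCol_iff, hc],
    if_pos hempty.1, hempty.2, sum_congr rfl fun i _ => hsingle i, sum_ite_mem, univ_inter,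
    sum_const, hz, nsmul_eq_mul]
  simp only [g, weight, hM, true_and, hz]
  -- for `z = k` the term `z * g (z - 1)` is evaluated separately at `z = 0` and `z ≥ 1`
  rcases (show z + 1 = k ∨ z = k ∨ z = k + 1 ∨ (z + 1 ≠ k ∧ z ≠ k ∧ z ≠ k + 1) by omega)
    with rfl | rfl | rfl | _ <;> (try rcases z with _ | z) <;>
    simp (disch := omega) only [if_pos, if_neg, ite_self] <;> push_cast <;> ring

noncomputable def rlminPoly (n k : ℕ) : R := ∑ M : Fin n → Fin n → Bool, weight w k M

lemma rlminPoly_zero (k : ℕ) : rlminPoly w 0 k = if k = 0 then 1 else 0 := by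
  rw [rlminPoly, Fintype.sum_unique]
  simp [weight, IsPartialPermMatrix, AtMostOneTrue, zeroRowSet, rlmin]
  exact if_congr eq_comm rfl rfl

lemma rlminPoly_succ (n k : ℕ) :
    rlminPoly w (n + 1) k =
      (if k = 0 then 0 else rlminPoly w n (k - 1)) + (((2 * k : ℕ) : R) + w) * rlminPoly w n k +
        (((k + 1 : ℕ) : R) * ((k : ℕ) + w)) * rlminPoly w n (k + 1) := by
  simp only [rlminPoly, sum_bool_matrix_succ, sum_sum_weight_snoc_appendCol, sum_add_distrib, mul_sum]
  split_ifs <;> simp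

open scoped Classical in
lemma rlminPoly_eq_sum (n k : ℕ) :
    rlminPoly w n k = ∑ M : Fin n → Fin n → Bool,
      if isPP M ∧ zeroRows M = k then w ^ rlminStat M else 0 := by
  have hPP (M : Fin n → Fin n → Bool) : IsPartialPermMatrix M ↔ isPP M :=
    ⟨fun h => ⟨fun i => h.1 i, fun i i' j => h.2 j i i'⟩,
      fun h => ⟨fun i => h.1 i, fun j i i' => h.2 i i' j⟩⟩
  have hzero (M : Fin n → Fin n → Bool) : #(zeroRowSet M) = zeroRows M := by
    unfold zeroRowSet zeroRows
    congr
  have hrlmin (M : Fin n → Fin n → Bool) : rlmin M = rlminStat M := by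
    unfold rlmin rlminStat
    congr
  exact sum_congr rfl fun M _ =>
    if_congr (and_congr (hPP M) (by rw [hzero])) (by rw [hrlmin]) rfl

end Weight

end PP

open scoped Classical in
theorem stmt10 (a : ℕ → ℕ → Polynomial ℤ)
    (h00 : a 0 0 = 1) (h0k : ∀ k, 0 < k → a 0 k = 0)
    (hrec : ∀ n k, a (n+1) k =
      (if k = 0 then 0 else a n (k-1))
      + (((2*k : ℕ) : Polynomial ℤ) + Polynomial.X) * a n k
      + (((k+1 : ℕ) : Polynomial ℤ) * (((k : ℕ) : Polynomial ℤ) + Polynomial.X)) * a n (k+1)) :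
    ∀ n k, a n k = ∑ M : Fin n → Fin n → Bool,
      if PP.isPP M ∧ PP.zeroRows M = k then (Polynomial.X : Polynomial ℤ) ^ PP.rlminStat M else 0 := by
  suffices h : ∀ n k, a n k = PP.rlminPoly Polynomial.X n k by
    intro n k
    rw [h, PP.rlminPoly_eq_sum]
  intro n
  induction n with
  | zero =>
    intro k
    rcases Nat.eq_zero_or_pos k with rfl | hk
    · simp [h00, PP.rlminPoly_zero]
    · simp [h0k k hk, PP.rlminPoly_zero, hk.ne']
  | succ n ih => intro k; simp only [hrec, PP.rlminPoly_succ, ih]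
end

section
/- Let a(n,k) be defined by a(0,0)=1, a(0,k)=0 for k>0, a(n,-1)=0, and a(n,k) = a(n-1,k-1) + (2k+3)·a(n-1,k) + (k+2)²·a(n-1,k+1). Then a(n,k) equals the number of connected partial permutations of order n+1 with k+1 zero rows, and a(n,0) equals the number of connected permutations of {1,…,n+2}. -/
/-!
Removing the last row and column of a connected partial permutation of order `m + 1`
(`m ≥ 1`) leaves a connected partial permutation `M` of order `m` with at least one zero row:
connectedness at `i = m` says exactly that the leading `m × m` block has a zero row. Conversely,
if `M` has `z ≥ 1` zero rows (hence also `z` zero columns), it can be bordered in five ways: a `1`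
in the corner (`z` zero rows), an empty border (`z + 1`), the new column's `1` in one of the `z`
zero rows of `M` or the new row's `1` in one of the `z` zero columns (`z` each), or both (`z - 1`,
in `z²` ways). Writing `N m j` for the number of connected partial permutations of order `m`
with `j` zero rows, this gives
`N (m+1) j = [j ≥ 1] N m j + [j ≥ 2] N m (j-1) + 2 j N m j + (j+1)² N m (j+1)`,
which is the recurrence for `a n k = N (n+1) (k+1)`; at `j = 0` only the last case survives, so
`N (n+2) 0 = N (n+1) 1 = a n 0`.
-/

open Finset

lemma Option.exists_forall_eq_some_iff {α : Type*} {p : α → Prop}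
    (hp : ∀ a a', p a → p a' → a = a') : ∃ o : Option α, ∀ a, o = some a ↔ p a := by
  by_cases h : ∃ a, p a
  · obtain ⟨a, ha⟩ := h
    exact ⟨some a, fun a' => ⟨by rintro ⟨⟩; exact ha, fun ha' => by rw [hp a a' ha ha']⟩⟩
  · simp only [not_exists] at h
    exact ⟨none, fun a => by simp [h a]⟩

lemma Nat.card_subtype_and_const {α : Type*} (p : α → Prop) (Q : Prop) [Decidable Q] :
    Nat.card {a // p a ∧ Q} = if Q then Nat.card {a // p a} else 0 := by
  by_cases hQ : Q <;> simp [hQ]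

lemma Nat.card_subtype_prod_of_card_fiber {α β : Type*} [Finite α] [Finite β] {p : α → Prop}
    {q : α → β → Prop} {k : ℕ} (hq : ∀ a, p a → Nat.card {b // q a b} = k) :
    Nat.card {x : α × β // p x.1 ∧ q x.1 x.2} = Nat.card {a // p a} * k := by
  have : Fintype {a // p a} := Fintype.ofFinite _
  let e : {x : α × β // p x.1 ∧ q x.1 x.2} ≃ Σ a : {a // p a}, {b // q a b} :=
    { toFun := fun x => ⟨⟨x.1.1, x.2.1⟩, x.1.2, x.2.2⟩
      invFun := fun y => ⟨(y.1, y.2), y.1.2, y.2.2⟩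
      left_inv := fun _ => rfl
      right_inv := fun _ => rfl }
  rw [Nat.card_congr e, Nat.card_sigma, sum_congr rfl fun a _ => hq a.1 a.2, sum_const, smul_eq_mul,
    Finset.card_univ, Nat.card_eq_fintype_card]

namespace PP

abbrev BoolMat (m : ℕ) := Fin m → Fin m → Bool

variable {m : ℕ}

def IsZeroRow (M : BoolMat m) (i : Fin m) : Prop := ∀ j, M i j = false

def IsZeroCol (M : BoolMat m) (j : Fin m) : Prop := ∀ i, M i j = false

instance (M : BoolMat m) : DecidablePred (IsZeroRow M) :=
  fun i => inferInstanceAs (Decidable (∀ j, M i j = false))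

instance (M : BoolMat m) : DecidablePred (IsZeroCol M) :=
  fun j => inferInstanceAs (Decidable (∀ i, M i j = false))

lemma zeroRows_eq_card_isZeroRow (M : BoolMat m) : zeroRows M = #{i | IsZeroRow M i} := rfl

lemma card_not_isZeroRow {M : BoolMat m}
    (hrow : ∀ i j j', M i j = true → M i j' = true → j = j') :
    #{i | ¬IsZeroRow M i} = #{p : Fin m × Fin m | M p.1 p.2 = true} := by
  rw [← card_image_of_injOn (f := Prod.fst)]
  · congr 1
    ext i
    simp [IsZeroRow]
  · rintro ⟨i, j⟩ hij ⟨i', j'⟩ hij' (rfl : i = i')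
    simp only [coe_filter, Set.mem_ofPred_eq, mem_univ, true_and] at hij hij'
    rw [hrow i j j' hij hij']

lemma zeroRows_pos_iff {M : BoolMat m} : 0 < zeroRows M ↔ ∃ i, IsZeroRow M i := by
  simp [zeroRows_eq_card_isZeroRow, card_pos, filter_nonempty_iff]

lemma zeroRows_le_s12 (M : BoolMat m) : zeroRows M ≤ m :=
  (card_filter_le _ _).trans (by simp)

lemma zeroRows_add_card_not_isZeroRow (M : BoolMat m) :
    zeroRows M + #{i | ¬IsZeroRow M i} = m := by
  rw [zeroRows_eq_card_isZeroRow, card_filter_add_card_filter_not, card_univ, Fintype.card_fin]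

lemma card_isZeroCol {M : BoolMat m} (hM : isPP M) : #{j | IsZeroCol M j} = zeroRows M := by
  have hones :
      #{p : Fin m × Fin m | M p.2 p.1 = true} = #{p : Fin m × Fin m | M p.1 p.2 = true} :=
    card_equiv (Equiv.prodComm _ _) (by simp)
  have hrows := card_not_isZeroRow hM.1
  have hcols := card_not_isZeroRow (M := fun i j => M j i) (fun j i i' h h' => hM.2 i i' j h h')
  have := zeroRows_add_card_not_isZeroRow M
  have := zeroRows_add_card_not_isZeroRow (fun i j => M j i)
  change zeroRows (fun i j => M j i) = _
  omega

lemma card_subtype_isZeroRow (M : BoolMat m) : Nat.card {i // IsZeroRow M i} = zeroRows M := by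
  rw [Nat.card_eq_fintype_card, Fintype.card_subtype]; rfl

lemma card_subtype_isZeroCol {M : BoolMat m} (hM : isPP M) :
    Nat.card {j // IsZeroCol M j} = zeroRows M := by
  rw [Nat.card_eq_fintype_card, Fintype.card_subtype, card_isZeroCol hM]

/-- Borders `M` by a last column whose only possible `1` is in row `r`, a last row whose only
possible `1` is in column `c`, and the corner entry `b`. -/
def extend (M : BoolMat m) (r c : Option (Fin m)) (b : Bool) : BoolMat (m + 1) :=
  Fin.lastCases (Fin.lastCases b fun j => decide (c = some j))
    fun i => Fin.lastCases (decide (r = some i)) (M i)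

variable {M : BoolMat m} {r c : Option (Fin m)} {b : Bool}

@[simp] lemma extend_castSucc_castSucc (i j : Fin m) :
    extend M r c b i.castSucc j.castSucc = M i j := by simp [extend]

@[simp] lemma extend_castSucc_last (i : Fin m) :
    extend M r c b i.castSucc (Fin.last m) = decide (r = some i) := by simp [extend]

@[simp] lemma extend_last_castSucc (j : Fin m) :
    extend M r c b (Fin.last m) j.castSucc = decide (c = some j) := by simp [extend]

@[simp] lemma extend_last_last : extend M r c b (Fin.last m) (Fin.last m) = b := by simp [extend]

lemma isPP_extend_iff :
    isPP (extend M r c b) ↔ isPP M ∧ (∀ i, r = some i → IsZeroRow M i) ∧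
      (∀ j, c = some j → IsZeroCol M j) ∧ (b = true → r = none ∧ c = none) := by
  simp only [isPP, Fin.forall_fin_succ', extend_castSucc_castSucc, extend_castSucc_last,
    extend_last_castSucc, extend_last_last, IsZeroRow, IsZeroCol, Fin.castSucc_inj,
    Fin.castSucc_ne_last, (Fin.castSucc_ne_last _).symm, decide_eq_true_eq, imp_false]
  cases r <;> cases c <;> cases b <;> simp <;> grind

lemma extend_inj {M' : BoolMat m} {r' c' : Option (Fin m)} {b' : Bool} :
    extend M r c b = extend M' r' c' b' ↔ M = M' ∧ r = r' ∧ c = c' ∧ b = b' := by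
  refine ⟨fun h => ⟨funext₂ fun i j => ?_, Option.ext fun i => ?_, Option.ext fun j => ?_,
    ?_⟩, by rintro ⟨rfl, rfl, rfl, rfl⟩; rfl⟩
  · simpa using congrFun₂ h i.castSucc j.castSucc
  · simpa using congrFun₂ h i.castSucc (Fin.last m)
  · simpa using congrFun₂ h (Fin.last m) j.castSucc
  · simpa using congrFun₂ h (Fin.last m) (Fin.last m)

lemma exists_eq_extend {M' : BoolMat (m + 1)} (hM' : isPP M') :
    ∃ M r c b, M' = extend M r c b := by
  obtain ⟨r, hr⟩ :=
    Option.exists_forall_eq_some_iff (p := fun i => M' i.castSucc (Fin.last m) = true)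
      fun i i' h h' => Fin.castSucc_injective _ (hM'.2 _ _ _ h h')
  obtain ⟨c, hc⟩ :=
    Option.exists_forall_eq_some_iff (p := fun j => M' (Fin.last m) j.castSucc = true)
      fun j j' h h' => Fin.castSucc_injective _ (hM'.1 _ _ _ h h')
  refine ⟨fun i j => M' i.castSucc j.castSucc, r, c, M' (Fin.last m) (Fin.last m),
    funext₂ fun i j => ?_⟩
  cases i using Fin.lastCases <;> cases j using Fin.lastCases <;> simp [hr, hc]

lemma isZeroRow_extend_castSucc {i : Fin m} :
    IsZeroRow (extend M r c b) i.castSucc ↔ IsZeroRow M i ∧ r ≠ some i := by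
  simp [IsZeroRow, Fin.forall_fin_succ']

lemma isZeroRow_extend_last :
    IsZeroRow (extend M r c b) (Fin.last m) ↔ c = none ∧ b = false := by
  simp [IsZeroRow, Fin.forall_fin_succ', Option.eq_none_iff_forall_ne_some]

lemma zeroRows_extend (hr : ∀ i, r = some i → IsZeroRow M i) :
    zeroRows (extend M r c b) + #r.toFinset
      = zeroRows M + if c = none ∧ b = false then 1 else 0 := by
  have hsub : r.toFinset ⊆ ({i | IsZeroRow M i} : Finset (Fin m)) := fun i hi => by
    simpa using hr i (by simpa using hi)
  have hcast : #{i | IsZeroRow M i ∧ r ≠ some i} =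
      #(({i | IsZeroRow M i} : Finset (Fin m)) \ r.toFinset) := by
    congr 1; ext i; simp [and_comm]
  rw [zeroRows_eq_card_isZeroRow, zeroRows_eq_card_isZeroRow, card_filter, card_filter,
    Fin.sum_univ_castSucc]
  simp only [isZeroRow_extend_castSucc, isZeroRow_extend_last, ← card_filter]
  rw [hcast, add_right_comm, card_sdiff_add_card_eq_card hsub]

def HasZeroRowInBlock {n : ℕ} (M : BoolMat n) (i : ℕ) : Prop :=
  ∃ k : Fin n, k.1 < i ∧ ∀ l : Fin n, l.1 < i → M k l = false

lemma conn_iff_hasZeroRowInBlock {n : ℕ} {M : BoolMat n} :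
    Conn M ↔ ∀ i, 0 < i → i < n → HasZeroRowInBlock M i := Iff.rfl

lemma hasZeroRowInBlock_self_iff : HasZeroRowInBlock M m ↔ ∃ i, IsZeroRow M i :=
  ⟨fun ⟨k, _, hk⟩ => ⟨k, fun l => hk l l.2⟩, fun ⟨k, hk⟩ => ⟨k, k.2, fun l _ => hk l⟩⟩

lemma hasZeroRowInBlock_extend_iff {i : ℕ} (hi : i ≤ m) :
    HasZeroRowInBlock (extend M r c b) i ↔ HasZeroRowInBlock M i := by
  constructor
  · rintro ⟨k, hk, hzero⟩
    cases k using Fin.lastCases with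
    | last => simp at hk; omega
    | cast k => exact ⟨k, by simpa using hk, fun l hl => by simpa using hzero l.castSucc hl⟩
  · rintro ⟨k, hk, hzero⟩
    refine ⟨k.castSucc, hk, fun l hl => ?_⟩
    cases l using Fin.lastCases with
    | last => simp at hl; omega
    | cast l => simpa using hzero l hl

lemma conn_extend_iff (hm : 0 < m) : Conn (extend M r c b) ↔ Conn M ∧ ∃ i, IsZeroRow M i := by
  simp only [conn_iff_hasZeroRowInBlock, ← hasZeroRowInBlock_self_iff]
  constructor
  · intro h
    exact ⟨fun i hi him => (hasZeroRowInBlock_extend_iff him.le).1 (h i hi (by omega)),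
      (hasZeroRowInBlock_extend_iff le_rfl).1 (h m hm (by omega))⟩
  · rintro ⟨hconn, hzero⟩ i hi him
    rw [hasZeroRowInBlock_extend_iff (by omega)]
    rcases Nat.lt_or_eq_of_le (Nat.le_of_lt_succ him) with him | rfl
    exacts [hconn i hi him, hzero]

def IsConnPP (j : ℕ) (M : BoolMat m) : Prop := isPP M ∧ zeroRows M = j ∧ Conn M

noncomputable def numConnPP (m j : ℕ) : ℕ := Nat.card {M : BoolMat m // IsConnPP j M}

lemma isConnPP_extend_iff (hm : 0 < m) {j : ℕ} :
    IsConnPP j (extend M r c b) ↔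
      (isPP M ∧ (∀ i, r = some i → IsZeroRow M i) ∧
        (∀ k, c = some k → IsZeroCol M k) ∧ (b = true → r = none ∧ c = none)) ∧
      zeroRows M + (if c = none ∧ b = false then 1 else 0) = j + #r.toFinset ∧
      Conn M ∧ ∃ i, IsZeroRow M i := by
  rw [IsConnPP, isPP_extend_iff, conn_extend_iff hm]
  constructor
  · rintro ⟨hpp, rfl, hconn⟩
    exact ⟨hpp, (zeroRows_extend hpp.2.1).symm, hconn⟩
  · rintro ⟨hpp, hz, hconn⟩
    exact ⟨hpp, by have := zeroRows_extend (c := c) (b := b) hpp.2.1; omega, hconn⟩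

abbrev BorderData (m j : ℕ) :=
  {M : BoolMat m // IsConnPP j M ∧ 1 ≤ j} ⊕
  {M : BoolMat m // IsConnPP (j - 1) M ∧ 2 ≤ j} ⊕
  {x : BoolMat m × Fin m // IsConnPP j x.1 ∧ IsZeroRow x.1 x.2} ⊕
  {x : BoolMat m × Fin m // IsConnPP j x.1 ∧ IsZeroCol x.1 x.2} ⊕
  {x : BoolMat m × (Fin m × Fin m) //
    IsConnPP (j + 1) x.1 ∧ IsZeroRow x.1 x.2.1 ∧ IsZeroCol x.1 x.2.2}

def border {j : ℕ} : BorderData m j → BoolMat (m + 1)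
  | .inl x => extend x.1 none none true
  | .inr (.inl x) => extend x.1 none none false
  | .inr (.inr (.inl x)) => extend x.1.1 (some x.1.2) none false
  | .inr (.inr (.inr (.inl x))) => extend x.1.1 none (some x.1.2) false
  | .inr (.inr (.inr (.inr x))) => extend x.1.1 (some x.1.2.1) (some x.1.2.2) false

lemma border_injective {j : ℕ} : Function.Injective (border (m := m) (j := j)) := by
  rintro (x|x|x|x|x) (y|y|y|y|y) h <;> simp [border, extend_inj] at h ⊢ <;> grind

lemma exists_isZeroRow_of_isZeroCol (hM : isPP M) {k : Fin m} (hk : IsZeroCol M k) :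
    ∃ i, IsZeroRow M i :=
  zeroRows_pos_iff.1 (card_isZeroCol hM ▸ card_pos.2 ⟨k, by simpa using hk⟩)

lemma isConnPP_border (hm : 0 < m) {j : ℕ} (x : BorderData m j) : IsConnPP j (border x) := by
  rcases x with ⟨M, ⟨hpp, hz, hconn⟩, hj⟩ | ⟨M, ⟨hpp, hz, hconn⟩, hj⟩ |
    ⟨⟨M, i⟩, ⟨hpp, hz, hconn⟩, hi⟩ | ⟨⟨M, k⟩, ⟨hpp, hz, hconn⟩, hk⟩ |
    ⟨⟨M, i, k⟩, ⟨hpp, hz, hconn⟩, hi, hk⟩ <;>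
    rw [border, isConnPP_extend_iff hm]
  · exact ⟨⟨hpp, by simp, by simp, by simp⟩, by simp [hz], hconn,
      (zeroRows_pos_iff (M := M)).1 (by omega)⟩
  · exact ⟨⟨hpp, by simp, by simp, by simp⟩, by simp; omega, hconn,
      (zeroRows_pos_iff (M := M)).1 (by omega)⟩
  · exact ⟨⟨hpp, by simpa using hi, by simp, by simp⟩, by simp [hz], hconn, ⟨i, hi⟩⟩
  · exact ⟨⟨hpp, by simp, by simpa using hk, by simp⟩, by simp [hz], hconn,
      exists_isZeroRow_of_isZeroCol hpp hk⟩
  · exact ⟨⟨hpp, by simpa using hi, by simpa using hk, by simp⟩, by simp [hz], hconn,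
      ⟨i, hi⟩⟩

lemma exists_border_eq (hm : 0 < m) {j : ℕ} {M' : BoolMat (m + 1)} (h : IsConnPP j M') :
    ∃ x : BorderData m j, border x = M' := by
  obtain ⟨M, r, c, b, rfl⟩ := exists_eq_extend h.1
  obtain ⟨⟨hpp, hr, hc, hb⟩, hz, hconn, i₀, hi₀⟩ := (isConnPP_extend_iff hm).1 h
  have hM : ∀ k, zeroRows M = k → IsConnPP k M := fun k hk => ⟨hpp, hk, hconn⟩
  have hpos : 0 < zeroRows M := zeroRows_pos_iff.2 ⟨i₀, hi₀⟩
  rcases b with _ | _ <;> rcases r with _ | i <;> rcases c with _ | k <;>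
    simp only [Option.toFinset_none, Option.toFinset_some, card_empty, card_singleton,
      reduceCtorEq, and_true, and_false, if_true, if_false, add_zero] at hz hb
  · exact ⟨.inr (.inl ⟨M, hM _ (by omega), by omega⟩), rfl⟩
  · exact ⟨.inr (.inr (.inr (.inl ⟨(M, k), hM _ hz, hc k rfl⟩))), rfl⟩
  · exact ⟨.inr (.inr (.inl ⟨(M, i), hM _ (by omega), hr i rfl⟩)), rfl⟩
  · exact ⟨.inr (.inr (.inr (.inr ⟨(M, i, k), hM _ (by omega), hr i rfl, hc k rfl⟩))), rfl⟩
  · exact ⟨.inl ⟨M, hM _ hz, by omega⟩, rfl⟩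
  all_goals simp at hb

lemma numConnPP_succ (hm : 0 < m) (j : ℕ) :
    numConnPP (m + 1) j = (if 1 ≤ j then numConnPP m j else 0) +
      (if 2 ≤ j then numConnPP m (j - 1) else 0) + 2 * j * numConnPP m j +
      (j + 1) ^ 2 * numConnPP m (j + 1) := by
  have hbij : Function.Bijective fun x : BorderData m j => (⟨border x, isConnPP_border hm x⟩ :
      {M' : BoolMat (m + 1) // IsConnPP j M'}) :=
    ⟨fun x y h => border_injective (congrArg Subtype.val h),
      fun M' => (exists_border_eq hm M'.2).imp fun x hx => Subtype.ext hx⟩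
  rw [numConnPP, ← Nat.card_eq_of_bijective _ hbij]
  simp only [Nat.card_sum, Nat.card_subtype_and_const, numConnPP]
  rw [Nat.card_subtype_prod_of_card_fiber (q := IsZeroRow)
      fun M hM => (card_subtype_isZeroRow M).trans hM.2.1,
    Nat.card_subtype_prod_of_card_fiber (q := IsZeroCol)
      fun M hM => (card_subtype_isZeroCol hM.1).trans hM.2.1,
    Nat.card_subtype_prod_of_card_fiber
      (q := fun M (x : Fin m × Fin m) => IsZeroRow M x.1 ∧ IsZeroCol M x.2)
      fun M hM => by rw [Nat.card_congr Equiv.subtypeProdEquivProd, Nat.card_prod,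
        card_subtype_isZeroRow, card_subtype_isZeroCol hM.1, hM.2.1]]
  ring

lemma numConnPP_succ_zero (hm : 0 < m) : numConnPP (m + 1) 0 = numConnPP m 1 := by
  simpa using numConnPP_succ hm 0

lemma numConnPP_succ_succ (n k : ℕ) :
    numConnPP (n + 2) (k + 1) = (if k = 0 then 0 else numConnPP (n + 1) k) +
      (2 * k + 3) * numConnPP (n + 1) (k + 1) + (k + 2) ^ 2 * numConnPP (n + 1) (k + 2) := by
  rw [numConnPP_succ n.succ_pos, if_pos (by omega)]
  rcases k with _ | k <;> simp <;> ring

lemma numConnPP_eq_zero_of_lt {j : ℕ} (h : m < j) : numConnPP m j = 0 :=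
  have : IsEmpty {M : BoolMat m // IsConnPP j M} := ⟨fun M => by
    have := zeroRows_le_s12 M.1; have := M.2.2.1; omega⟩
  Nat.card_of_isEmpty

lemma numConnPP_one_one : numConnPP 1 1 = 1 := by
  refine Nat.card_eq_one_iff_exists.2 ⟨⟨fun _ _ => false, by simp [isPP], by decide,
    fun i h h' => by omega⟩, fun ⟨M, hM⟩ => Subtype.ext (funext₂ fun i j => ?_)⟩
  obtain ⟨i₀, hi₀⟩ := zeroRows_pos_iff.1 (hM.2.1 ▸ one_pos)
  exact (Subsingleton.elim i i₀) ▸ hi₀ j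

end PP

theorem stmt12 (a : ℕ → ℕ → ℕ) (h00 : a 0 0 = 1) (h0k : ∀ k, 0 < k → a 0 k = 0)
    (hrec : ∀ n k, a (n+1) k =
      (if k = 0 then 0 else a n (k-1)) + (2*k+3) * a n k + (k+2)^2 * a n (k+1)) :
    (∀ n k, a n k = Nat.card {M : Fin (n+1) → Fin (n+1) → Bool //
        PP.isPP M ∧ PP.zeroRows M = k+1 ∧ PP.Conn M}) ∧
    (∀ n, a n 0 = Nat.card {M : Fin (n+2) → Fin (n+2) → Bool //
        PP.isPP M ∧ PP.zeroRows M = 0 ∧ PP.Conn M}) := by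
  have key : ∀ n k, a n k = PP.numConnPP (n + 1) (k + 1) := by
    intro n
    induction n with
    | zero =>
      rintro (_ | k)
      · rw [h00, PP.numConnPP_one_one]
      · rw [h0k _ k.succ_pos, PP.numConnPP_eq_zero_of_lt (by omega)]
    | succ n ih =>
      rintro (_ | k) <;> simp [hrec, PP.numConnPP_succ_succ, ih]
  exact ⟨key, fun n => (key n 0).trans (PP.numConnPP_succ_zero n.succ_pos).symm⟩
end

section
/- The number of connected partial permutations of order n with 0 zero rows (i.e., connected permutations of {1,…,n}) equals the number of connected partial permutations of order n-1 with exactly 1 zero row, for all n ≥ 2. -/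
namespace PPaux
open PP

variable {m : ℕ}

def restr (M : Fin (m+1) → Fin (m+1) → Bool) : Fin m → Fin m → Bool :=
  fun i j => M i.castSucc j.castSucc

def ext (N : Fin m → Fin m → Bool) (r c : Fin m) : Fin (m+1) → Fin (m+1) → Bool :=
  fun i j =>
    if hi : i.1 < m then
      if hj : j.1 < m then N ⟨i.1, hi⟩ ⟨j.1, hj⟩
      else decide ((⟨i.1, hi⟩ : Fin m) = r)
    else
      if hj : j.1 < m then decide ((⟨j.1, hj⟩ : Fin m) = c)
      else false

lemma castSucc_mk (i : Fin (m+1)) (hi : i.1 < m) : (⟨i.1, hi⟩ : Fin m).castSucc = i :=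
  Fin.ext rfl

lemma eq_last (i : Fin (m+1)) (hi : ¬ i.1 < m) : i = Fin.last m :=
  by apply Fin.ext; rw [Fin.val_last]; have := i.isLt; omega

lemma restr_ext (N : Fin m → Fin m → Bool) (r c : Fin m) : restr (ext N r c) = N := by
  funext i j
  simp only [restr, ext]
  rw [dif_pos, dif_pos]
  · rfl

lemma zeroRows_eq_zero_iff {k : ℕ} (M : Fin k → Fin k → Bool) :
    zeroRows M = 0 ↔ ∀ i, ∃ j, M i j = true := by
  unfold zeroRows
  rw [Finset.card_eq_zero, Finset.filter_eq_empty_iff]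
  simp

lemma zeroRows_eq_one_iff {k : ℕ} (M : Fin k → Fin k → Bool) (r : Fin k) :
    (Finset.univ.filter (fun i : Fin k => ∀ j, M i j = false)) = {r} →
    zeroRows M = 1 := by
  intro h; unfold zeroRows; rw [h]; simp

lemma exists_unique_zero_row {k : ℕ} (M : Fin k → Fin k → Bool) (h : zeroRows M = 1) :
    ∃ r, (∀ j, M r j = false) ∧ ∀ i, (∀ j, M i j = false) → i = r := by
  unfold zeroRows at h
  obtain ⟨r, hr⟩ := Finset.card_eq_one.mp h
  refine ⟨r, ?_, ?_⟩
  · have : r ∈ Finset.univ.filter (fun i : Fin k => ∀ j, M i j = false) := by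
      rw [hr]; exact Finset.mem_singleton_self r
    exact (Finset.mem_filter.mp this).2
  · intro i hi
    have : i ∈ Finset.univ.filter (fun i : Fin k => ∀ j, M i j = false) := by
      exact Finset.mem_filter.mpr ⟨Finset.mem_univ _, hi⟩
    rw [hr] at this; exact Finset.mem_singleton.mp this

lemma exists_zero_col {k : ℕ} (N : Fin k → Fin k → Bool) (hPP : isPP N)
    (h1 : zeroRows N = 1) : ∃ c, ∀ i, N i c = false := by
  obtain ⟨r, hr, _⟩ := exists_unique_zero_row N h1
  by_contra h
  push_neg at h
  have h' : ∀ c, ∃ i, N i c = true := by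
    intro c; obtain ⟨i, hi⟩ := h c
    exact ⟨i, by revert hi; cases N i c <;> simp⟩
  choose g hg using h'
  have hinj : Set.InjOn g ↑(Finset.univ : Finset (Fin k)) := by
    intro a _ b _ hab
    exact hPP.1 (g a) a b (hg a) (by rw [hab]; exact hg b)
  have hmaps : ∀ a ∈ (Finset.univ : Finset (Fin k)), g a ∈ Finset.univ.erase r := by
    intro a _
    refine Finset.mem_erase.mpr ⟨?_, Finset.mem_univ _⟩
    intro hgr
    have := hg a
    rw [hgr, hr a] at this
    exact Bool.false_ne_true this
  have hcard := Finset.card_le_card_of_injOn g hmaps hinj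
  rw [Finset.card_erase_of_mem (Finset.mem_univ r), Finset.card_univ, Fintype.card_fin] at hcard
  have : 0 < k := r.pos
  omega

section Main
variable {m : ℕ}

lemma ext_apply_lt (N : Fin m → Fin m → Bool) (r c : Fin m) (i j : Fin (m+1))
    (hi : i.1 < m) (hj : j.1 < m) : ext N r c i j = N ⟨i.1, hi⟩ ⟨j.1, hj⟩ := by
  unfold ext; rw [dif_pos hi, dif_pos hj]

lemma ext_apply_rlast (N : Fin m → Fin m → Bool) (r c : Fin m) (i : Fin (m+1))
    (hi : i.1 < m) : ext N r c i (Fin.last m) = decide ((⟨i.1, hi⟩ : Fin m) = r) := by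
  unfold ext; rw [dif_pos hi, dif_neg (by simp)]

lemma ext_apply_last (N : Fin m → Fin m → Bool) (r c : Fin m) (j : Fin (m+1))
    (hj : j.1 < m) : ext N r c (Fin.last m) j = decide ((⟨j.1, hj⟩ : Fin m) = c) := by
  unfold ext; rw [dif_neg (by simp), dif_pos hj]

lemma ext_apply_ll (N : Fin m → Fin m → Bool) (r c : Fin m) :
    ext N r c (Fin.last m) (Fin.last m) = false := by
  unfold ext; rw [dif_neg (by simp), dif_neg (by simp)]

lemma col_surj {k : ℕ} (M : Fin k → Fin k → Bool) (hPP : isPP M)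
    (h0 : zeroRows M = 0) : ∀ j, ∃ i, M i j = true := by
  have hrow := (zeroRows_eq_zero_iff M).mp h0
  choose f hf using hrow
  have hinj : Function.Injective f :=
    fun a b hab => hPP.2 a b (f a) (hf a) (by rw [hab]; exact hf b)
  intro j
  obtain ⟨i, hi⟩ := Finite.injective_iff_surjective.mp hinj j
  exact ⟨i, hi ▸ hf i⟩

lemma fwd_main (M : Fin (m+1) → Fin (m+1) → Bool) (hPP : isPP M)
    (h0 : zeroRows M = 0) (hC : Conn M) (hm : 0 < m) :
    ∃ r0 : Fin (m+1), r0.1 < m ∧ M r0 (Fin.last m) = true ∧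
      (∀ c, c.1 < m → M r0 c = false) ∧
      (∀ i, M i (Fin.last m) = true → i = r0) := by
  obtain ⟨r0, hr0m, hr0⟩ := hC m hm (Nat.lt_succ_self m)
  obtain ⟨j, hj⟩ := (zeroRows_eq_zero_iff M).mp h0 r0
  have hjlast : j = Fin.last m := by
    by_cases hjm : j.1 < m
    · rw [hr0 j hjm] at hj; exact absurd hj (by simp)
    · exact eq_last j hjm
  subst hjlast
  exact ⟨r0, hr0m, hj, hr0, fun i hi => hPP.2 i r0 (Fin.last m) hi hj⟩

lemma fwd_cs (M : Fin (m+1) → Fin (m+1) → Bool) (hPP : isPP M)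
    (h0 : zeroRows M = 0) (hC : Conn M) (hm : 0 < m) :
    ∃ cs : Fin (m+1), cs.1 < m ∧ M (Fin.last m) cs = true ∧
      ∀ j, M (Fin.last m) j = true → j = cs := by
  obtain ⟨r0, hr0m, hr0last, _, _⟩ := fwd_main M hPP h0 hC hm
  obtain ⟨j, hj⟩ := (zeroRows_eq_zero_iff M).mp h0 (Fin.last m)
  have hjm : j.1 < m := by
    by_contra h
    rw [eq_last j h] at hj
    have h2 := hPP.2 (Fin.last m) r0 (Fin.last m) hj hr0last
    rw [← h2] at hr0m
    exact absurd hr0m (by simp)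
  exact ⟨j, hjm, hj, fun j' hj' => hPP.1 (Fin.last m) j' j hj' hj⟩

lemma fwd_isPP (M : Fin (m+1) → Fin (m+1) → Bool) (hPP : isPP M) : isPP (restr M) := by
  constructor
  · intro i j j' h h'
    exact Fin.castSucc_injective m (hPP.1 i.castSucc j.castSucc j'.castSucc h h')
  · intro i i' j h h'
    exact Fin.castSucc_injective m (hPP.2 i.castSucc i'.castSucc j.castSucc h h')

lemma fwd_zeroRows (M : Fin (m+1) → Fin (m+1) → Bool) (hPP : isPP M)
    (h0 : zeroRows M = 0) (hC : Conn M) (hm : 0 < m) : zeroRows (restr M) = 1 := by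
  obtain ⟨r0, hr0m, hr0last, hr0, hr0u⟩ := fwd_main M hPP h0 hC hm
  apply zeroRows_eq_one_iff (restr M) ⟨r0.1, hr0m⟩
  ext i
  simp only [Finset.mem_filter, Finset.mem_univ, true_and, Finset.mem_singleton]
  constructor
  · intro hi
    obtain ⟨j, hj⟩ := (zeroRows_eq_zero_iff M).mp h0 i.castSucc
    have hjlast : j = Fin.last m := by
      by_cases hjm : j.1 < m
      · have := hi ⟨j.1, hjm⟩
        rw [restr, castSucc_mk j hjm] at this
        rw [this] at hj; exact absurd hj (by simp)
      · exact eq_last j hjm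
    subst hjlast
    have := hr0u i.castSucc hj
    apply Fin.ext
    have : (i.castSucc).1 = r0.1 := by rw [this]
    simpa using this
  · intro hi j
    subst hi
    rw [restr, castSucc_mk r0 hr0m]
    exact hr0 j.castSucc (by simpa using j.isLt)

lemma fwd_conn (M : Fin (m+1) → Fin (m+1) → Bool) (hC : Conn M) : Conn (restr M) := by
  intro i h0i him
  obtain ⟨r1, hr1, h⟩ := hC i h0i (him.trans (Nat.lt_succ_self m))
  refine ⟨⟨r1.1, hr1.trans him⟩, hr1, ?_⟩
  intro c hc
  rw [restr, castSucc_mk r1 (hr1.trans him)]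
  exact h c.castSucc (by simpa using hc)

lemma fwd_props (M : Fin (m+1) → Fin (m+1) → Bool) (hm : 0 < m)
    (h : isPP M ∧ zeroRows M = 0 ∧ Conn M) :
    isPP (restr M) ∧ zeroRows (restr M) = 1 ∧ Conn (restr M) :=
  ⟨fwd_isPP M h.1, fwd_zeroRows M h.1 h.2.1 h.2.2 hm, fwd_conn M h.2.2⟩

lemma bwd_isPP (N : Fin m → Fin m → Bool) (hPP : isPP N) (r c : Fin m)
    (hr : ∀ j, N r j = false) (hc : ∀ i, N i c = false) : isPP (ext N r c) := by
  constructor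
  · intro i j j' h h'
    by_cases hi : i.1 < m
    · by_cases hj : j.1 < m <;> by_cases hj' : j'.1 < m
      · rw [ext_apply_lt N r c i j hi hj] at h
        rw [ext_apply_lt N r c i j' hi hj'] at h'
        have h3 := hPP.1 _ _ _ h h'
        have h4 : j.1 = j'.1 := by simpa using h3
        exact Fin.ext h4
      · rw [eq_last j' hj'] at h' ⊢
        rw [ext_apply_rlast N r c i hi] at h'
        rw [ext_apply_lt N r c i j hi hj] at h
        have hir : (⟨i.1, hi⟩ : Fin m) = r := of_decide_eq_true h'
        rw [hir, hr] at h
        exact absurd h (by simp)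
      · rw [eq_last j hj] at h ⊢
        rw [ext_apply_rlast N r c i hi] at h
        rw [ext_apply_lt N r c i j' hi hj'] at h'
        have hir : (⟨i.1, hi⟩ : Fin m) = r := of_decide_eq_true h
        rw [hir, hr] at h'
        exact absurd h' (by simp)
      · rw [eq_last j hj, eq_last j' hj']
    · rw [eq_last i hi] at h h'
      by_cases hj : j.1 < m <;> by_cases hj' : j'.1 < m
      · rw [ext_apply_last N r c j hj] at h
        rw [ext_apply_last N r c j' hj'] at h'
        have h1 : (⟨j.1, hj⟩ : Fin m) = c := of_decide_eq_true h
        have h2 : (⟨j'.1, hj'⟩ : Fin m) = c := of_decide_eq_true h'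
        have h4 : j.1 = j'.1 := by simpa using h1.trans h2.symm
        exact Fin.ext h4
      · rw [eq_last j' hj', ext_apply_ll] at h'; exact absurd h' (by simp)
      · rw [eq_last j hj, ext_apply_ll] at h; exact absurd h (by simp)
      · rw [eq_last j hj, eq_last j' hj']
  · intro i i' j h h'
    by_cases hj : j.1 < m
    · by_cases hi : i.1 < m <;> by_cases hi' : i'.1 < m
      · rw [ext_apply_lt N r c i j hi hj] at h
        rw [ext_apply_lt N r c i' j hi' hj] at h'
        have h3 := hPP.2 _ _ _ h h'
        have h4 : i.1 = i'.1 := by simpa using h3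
        exact Fin.ext h4
      · rw [eq_last i' hi'] at h' ⊢
        rw [ext_apply_last N r c j hj] at h'
        rw [ext_apply_lt N r c i j hi hj] at h
        have hjc : (⟨j.1, hj⟩ : Fin m) = c := of_decide_eq_true h'
        rw [hjc, hc] at h
        exact absurd h (by simp)
      · rw [eq_last i hi] at h ⊢
        rw [ext_apply_last N r c j hj] at h
        rw [ext_apply_lt N r c i' j hi' hj] at h'
        have hjc : (⟨j.1, hj⟩ : Fin m) = c := of_decide_eq_true h
        rw [hjc, hc] at h'
        exact absurd h' (by simp)
      · rw [eq_last i hi, eq_last i' hi']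
    · rw [eq_last j hj] at h h'
      by_cases hi : i.1 < m <;> by_cases hi' : i'.1 < m
      · rw [ext_apply_rlast N r c i hi] at h
        rw [ext_apply_rlast N r c i' hi'] at h'
        have h1 : (⟨i.1, hi⟩ : Fin m) = r := of_decide_eq_true h
        have h2 : (⟨i'.1, hi'⟩ : Fin m) = r := of_decide_eq_true h'
        have h4 : i.1 = i'.1 := by simpa using h1.trans h2.symm
        exact Fin.ext h4
      · rw [eq_last i' hi', ext_apply_ll] at h'; exact absurd h' (by simp)
      · rw [eq_last i hi, ext_apply_ll] at h; exact absurd h (by simp)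
      · rw [eq_last i hi, eq_last i' hi']

lemma bwd_zeroRows (N : Fin m → Fin m → Bool) (r c : Fin m)
    (hru : ∀ i, (∀ j, N i j = false) → i = r) : zeroRows (ext N r c) = 0 := by
  rw [zeroRows_eq_zero_iff]
  intro i
  by_cases hi : i.1 < m
  · by_cases hz : ∀ j, N ⟨i.1, hi⟩ j = false
    · refine ⟨Fin.last m, ?_⟩
      rw [ext_apply_rlast N r c i hi]
      exact decide_eq_true (hru _ hz)
    · push_neg at hz
      obtain ⟨j, hj⟩ := hz
      refine ⟨j.castSucc, ?_⟩
      rw [ext_apply_lt N r c i j.castSucc hi (by simpa using j.isLt)]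
      have : (⟨j.castSucc.1, by simpa using j.isLt⟩ : Fin m) = j := Fin.ext rfl
      rw [this]
      revert hj; cases N ⟨i.1, hi⟩ j <;> simp
  · refine ⟨c.castSucc, ?_⟩
    rw [eq_last i hi, ext_apply_last N r c c.castSucc (by simpa using c.isLt)]
    apply decide_eq_true
    exact Fin.ext rfl

lemma bwd_conn (N : Fin m → Fin m → Bool) (r c : Fin m)
    (hr : ∀ j, N r j = false) (hC : Conn N) : Conn (ext N r c) := by
  intro i h0i him
  by_cases hi : i < m
  · obtain ⟨r1, hr1, h⟩ := hC i h0i hi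
    refine ⟨r1.castSucc, by simpa using hr1, ?_⟩
    intro cc hcc
    have hcm : cc.1 < m := lt_trans hcc hi
    rw [ext_apply_lt N r c r1.castSucc cc (by simpa using r1.isLt) hcm]
    have h1 : (⟨r1.castSucc.1, by simpa using r1.isLt⟩ : Fin m) = r1 := Fin.ext rfl
    rw [h1]
    exact h ⟨cc.1, hcm⟩ hcc
  · have him' : i = m := by omega
    refine ⟨r.castSucc, by simpa [him'] using r.isLt, ?_⟩
    intro cc hcc
    have hcm : cc.1 < m := by omega
    rw [ext_apply_lt N r c r.castSucc cc (by simpa using r.isLt) hcm]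
    have h1 : (⟨r.castSucc.1, by simpa using r.isLt⟩ : Fin m) = r := Fin.ext rfl
    rw [h1]
    exact hr _

lemma bwd_props (N : Fin m → Fin m → Bool) (h : isPP N ∧ zeroRows N = 1 ∧ Conn N)
    (r c : Fin m) (hr : ∀ j, N r j = false) (hru : ∀ i, (∀ j, N i j = false) → i = r)
    (hc : ∀ i, N i c = false) :
    isPP (ext N r c) ∧ zeroRows (ext N r c) = 0 ∧ Conn (ext N r c) :=
  ⟨bwd_isPP N h.1 r c hr hc, bwd_zeroRows N r c hru, bwd_conn N r c hr h.2.2⟩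

lemma left_inv_key (M : Fin (m+1) → Fin (m+1) → Bool) (hPP : isPP M)
    (h0 : zeroRows M = 0) (hC : Conn M) (hm : 0 < m) (r' c' : Fin m)
    (hr' : ∀ j, restr M r' j = false) (hc' : ∀ i, restr M i c' = false) :
    ext (restr M) r' c' = M := by
  obtain ⟨r0, hr0m, hr0last, hr0, hr0u⟩ := fwd_main M hPP h0 hC hm
  obtain ⟨cs, hcsm, hcslast, hcsu⟩ := fwd_cs M hPP h0 hC hm
  -- r'.castSucc = r0
  have hr'cast : r'.castSucc = r0 := by
    obtain ⟨j, hj⟩ := (zeroRows_eq_zero_iff M).mp h0 r'.castSucc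
    have hjlast : j = Fin.last m := by
      by_cases hjm : j.1 < m
      · have := hr' ⟨j.1, hjm⟩
        rw [restr, castSucc_mk j hjm] at this
        rw [this] at hj; exact absurd hj (by simp)
      · exact eq_last j hjm
    subst hjlast
    exact hr0u _ hj
  -- c'.castSucc = cs
  have hc'cast : c'.castSucc = cs := by
    obtain ⟨i, hi⟩ := col_surj M hPP h0 c'.castSucc
    have hilast : i = Fin.last m := by
      by_cases him : i.1 < m
      · have := hc' ⟨i.1, him⟩
        rw [restr, castSucc_mk i him] at this
        rw [this] at hi; exact absurd hi (by simp)
      · exact eq_last i him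
    subst hilast
    exact hcsu _ hi
  funext i j
  by_cases hi : i.1 < m <;> by_cases hj : j.1 < m
  · rw [ext_apply_lt (restr M) r' c' i j hi hj, restr, castSucc_mk i hi, castSucc_mk j hj]
  · rw [eq_last j hj, ext_apply_rlast (restr M) r' c' i hi]
    by_cases he : (⟨i.1, hi⟩ : Fin m) = r'
    · rw [decide_eq_true he]
      have : i = r0 := by
        rw [← hr'cast, ← he, castSucc_mk i hi]
      rw [this]
      exact hr0last.symm
    · rw [decide_eq_false he]
      cases hMi : M i (Fin.last m)
      · rfl
      · exfalso
        apply he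
        have h1 : i = r0 := hr0u i hMi
        have : (⟨i.1, hi⟩ : Fin m).castSucc = r'.castSucc := by
          rw [castSucc_mk i hi, hr'cast, h1]
        exact Fin.castSucc_injective m this
  · rw [eq_last i hi, ext_apply_last (restr M) r' c' j hj]
    by_cases he : (⟨j.1, hj⟩ : Fin m) = c'
    · rw [decide_eq_true he]
      have : j = cs := by
        rw [← hc'cast, ← he, castSucc_mk j hj]
      rw [this]
      exact hcslast.symm
    · rw [decide_eq_false he]
      cases hMj : M (Fin.last m) j
      · rfl
      · exfalso
        apply he
        have h1 : j = cs := hcsu j hMj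
        have : (⟨j.1, hj⟩ : Fin m).castSucc = c'.castSucc := by
          rw [castSucc_mk j hj, hc'cast, h1]
        exact Fin.castSucc_injective m this
  · rw [eq_last i hi, eq_last j hj, ext_apply_ll]
    cases hMl : M (Fin.last m) (Fin.last m)
    · rfl
    · exfalso
      have h5 := hr0u _ hMl
      rw [← h5] at hr0m
      exact absurd hr0m (by simp)

noncomputable def theEquiv (m : ℕ) (hm : 0 < m) :
    {M : Fin (m+1) → Fin (m+1) → Bool // isPP M ∧ zeroRows M = 0 ∧ Conn M} ≃
    {N : Fin m → Fin m → Bool // isPP N ∧ zeroRows N = 1 ∧ Conn N} where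
  toFun M := ⟨restr M.1, fwd_props M.1 hm M.2⟩
  invFun N := ⟨ext N.1 (exists_unique_zero_row N.1 N.2.2.1).choose
      (exists_zero_col N.1 N.2.1 N.2.2.1).choose,
    bwd_props N.1 N.2 _ _ (exists_unique_zero_row N.1 N.2.2.1).choose_spec.1
      (exists_unique_zero_row N.1 N.2.2.1).choose_spec.2
      (exists_zero_col N.1 N.2.1 N.2.2.1).choose_spec⟩
  left_inv x := Subtype.ext (left_inv_key x.1 x.2.1 x.2.2.1 x.2.2.2 hm _ _
    (exists_unique_zero_row (restr x.1) (fwd_props x.1 hm x.2).2.1).choose_spec.1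
    (exists_zero_col (restr x.1) (fwd_props x.1 hm x.2).1
      (fwd_props x.1 hm x.2).2.1).choose_spec)
  right_inv x := Subtype.ext (restr_ext _ _ _)

end Main
end PPaux

theorem stmt13 (n : ℕ) (hn : 2 ≤ n) :
    Nat.card {M : Fin n → Fin n → Bool // PP.isPP M ∧ PP.zeroRows M = 0 ∧ PP.Conn M}
    = Nat.card {M : Fin (n-1) → Fin (n-1) → Bool //
        PP.isPP M ∧ PP.zeroRows M = 1 ∧ PP.Conn M} := by
  obtain ⟨m, rfl⟩ : ∃ m, n = m + 1 := ⟨n - 1, by omega⟩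
  exact Nat.card_congr (PPaux.theEquiv m (by omega))
end
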